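/- arXiv:1012.1634 — 7 statements merged into one kernel-verified Lean document; each statement's English description precedes it below -/
import Mathlib

section
/- Every entry of a modular invariant for the lattice (torus) chiral data is either 0 or 1. Precisely: let L be an even lattice in R^n, let the primaries be the cosets L*/L with S-matrix S_{[u],[v]} = |L*/L|^{-1/2} exp(2πi u·v), and let Z be a nonnegative-integer matrix indexed by L*/L with Z S = S Z and Z_{[0],[0]} = 1. Then Z_{[u],[v]} ∈ {0,1} for all [u],[v]. -/
/-!
STATEMENT 0: Every entry of a modular invariant for the lattice (torus) chiral
data is either 0 or 1.
-/

open scoped BigOperators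
open Complex

noncomputable section

/-- The Euclidean dot product on `Fin n → ℝ`. -/
def dotR {n : ℕ} (u v : Fin n → ℝ) : ℝ := ∑ i, u i * v i

lemma dotR_add_left {n : ℕ} (u v w : Fin n → ℝ) :
    dotR (u + v) w = dotR u w + dotR v w := by
  simp [dotR, add_mul, Finset.sum_add_distrib]

lemma dotR_neg_left {n : ℕ} (u w : Fin n → ℝ) : dotR (-u) w = -dotR u w := by
  simp [dotR]

/-- `L` is an even lattice: `u ⬝ u ∈ 2ℤ` for all `u ∈ L`. -/
def IsEvenLattice {n : ℕ} (L : AddSubgroup (Fin n → ℝ)) : Prop :=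
  ∀ u ∈ L, ∃ m : ℤ, dotR u u = 2 * m

/-- The dual lattice `L* = {x : x ⬝ L ⊆ ℤ}`. -/
def dualLattice {n : ℕ} (L : AddSubgroup (Fin n → ℝ)) : AddSubgroup (Fin n → ℝ) where
  carrier := {x | ∀ l ∈ L, ∃ m : ℤ, dotR x l = m}
  zero_mem' := fun l _ => ⟨0, by simp [dotR]⟩
  add_mem' := by
    intro a b ha hb l hl
    obtain ⟨m, hm⟩ := ha l hl
    obtain ⟨m', hm'⟩ := hb l hl
    exact ⟨m + m', by rw [dotR_add_left, hm, hm']; push_cast; ring⟩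
  neg_mem' := by
    intro a ha l hl
    obtain ⟨m, hm⟩ := ha l hl
    exact ⟨-m, by rw [dotR_neg_left, hm]; push_cast; ring⟩

/-- The group of primaries `L*/L`. -/
abbrev latQuot {n : ℕ} (L : AddSubgroup (Fin n → ℝ)) :=
  dualLattice L ⧸ (L.addSubgroupOf (dualLattice L))

/-- The class of an element of `L*` in `L*/L`. -/
def mkQ {n : ℕ} (L : AddSubgroup (Fin n → ℝ)) (x : dualLattice L) : latQuot L :=
  QuotientAddGroup.mk x

/-- The S-matrix of the lattice chiral data:
`S_{[u],[v]} = |L*/L|^{-1/2} exp(2 π i u⬝v)`. -/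
def Smat {n : ℕ} (L : AddSubgroup (Fin n → ℝ)) [Fintype (latQuot L)] :
    Matrix (latQuot L) (latQuot L) ℂ := fun x y =>
  (((Real.sqrt (Fintype.card (latQuot L)))⁻¹ : ℝ) : ℂ) *
    Complex.exp (2 * Real.pi * Complex.I *
      (dotR ((Quotient.out x : dualLattice L) : Fin n → ℝ)
            ((Quotient.out y : dualLattice L) : Fin n → ℝ)))

/-!
An even lattice is discrete, and a lattice whose dual quotient `L*/L` is finite spans `ℝⁿ`;
so `L` is a full lattice and `L** = L`. Hence `d ∈ L*` pairs trivially with all of `L*` only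
when `d ∈ L`, and character orthogonality on `L*/L` makes `S` unitary. Then `Z = S Z S*`, and
since every entry of `S` has modulus `c = |L*/L|^{-1/2}` while the row of `S` at `[0]` is
constantly `c`, comparing the entry `(x, y)` with the entry `([0], [0])` of `S Z S*` gives
`Z x y ≤ c² ∑ Z a b = Z 0 0 = 1`.
-/

open Matrix

section DotProduct

variable {n : ℕ}

lemma dotR_eq_dotProduct (u v : Fin n → ℝ) : dotR u v = u ⬝ᵥ v := rfl

lemma dotR_comm (u v : Fin n → ℝ) : dotR u v = dotR v u := dotProduct_comm u v

lemma dotR_add_right (u v w : Fin n → ℝ) : dotR u (v + w) = dotR u v + dotR u w :=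
  dotProduct_add u v w

lemma dotR_self_le (u : Fin n → ℝ) : dotR u u ≤ n * ‖u‖ ^ 2 := by
  calc dotR u u = ∑ i, u i ^ 2 := by simp only [dotR, sq]
    _ ≤ ∑ _i : Fin n, ‖u‖ ^ 2 := Finset.sum_le_sum fun i _ => by
      simpa only [Real.norm_eq_abs, sq_abs] using
        pow_le_pow_left₀ (norm_nonneg _) (norm_le_pi_norm u i) 2
    _ = n * ‖u‖ ^ 2 := by simp

variable (n) in
abbrev dotForm : LinearMap.BilinForm ℝ (Fin n → ℝ) := dotProductBilin ℝ ℝ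

lemma dotForm_nondegenerate : (dotForm n).Nondegenerate :=
  ⟨fun u hu => dotProduct_self_eq_zero.mp (hu u),
    fun u hu => dotProduct_self_eq_zero.mp (hu u)⟩

lemma dotForm_isSymm : (dotForm n).IsSymm :=
  ⟨dotProduct_comm⟩

end DotProduct

section Lattice

variable {n : ℕ} (L : AddSubgroup (Fin n → ℝ))

lemma toIntSubmodule_dualLattice :
    AddSubgroup.toIntSubmodule (dualLattice L) =
      (dotForm n).dualSubmodule (AddSubgroup.toIntSubmodule L) := by
  ext x
  rw [LinearMap.BilinForm.mem_dualSubmodule]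
  simp only [Submodule.mem_one, algebraMap_int_eq, eq_intCast]
  exact forall₂_congr fun l _ => exists_congr fun m => eq_comm

lemma IsEvenLattice.discreteTopology (hEven : IsEvenLattice L) :
    DiscreteTopology (AddSubgroup.toIntSubmodule L) := by
  refine discreteTopology_of_isOpen_singleton_zero (Metric.isOpen_singleton_iff.mpr
    ⟨((n : ℝ) + 1)⁻¹, by positivity, fun ⟨u, hu⟩ hdist => ?_⟩)
  have hsmall : ‖u‖ < ((n : ℝ) + 1)⁻¹ := by simpa using hdist
  obtain ⟨m, hm⟩ := hEven u hu
  have hlt : dotR u u < 1 := by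
    have hnu : ‖u‖ * ((n : ℝ) + 1) < 1 := (lt_inv_mul_iff₀' (by positivity)).mp (by rwa [mul_one])
    nlinarith [dotR_self_le u, norm_nonneg u]
  have hm0 : m = 0 := by
    have hnonneg : 0 ≤ dotR u u := Finset.sum_nonneg fun i _ => mul_self_nonneg (u i)
    have : (0 : ℤ) ≤ m := by exact_mod_cast (by linarith : (0 : ℝ) ≤ m)
    have : m < 1 := by exact_mod_cast (by linarith : (m : ℝ) < 1)
    omega
  have : u = 0 := dotProduct_self_eq_zero.mp (by rw [← dotR_eq_dotProduct, hm, hm0]; simp)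
  subst this
  rfl

lemma span_eq_top_of_finite_latQuot [Finite (latQuot L)] :
    Submodule.span ℝ (L : Set (Fin n → ℝ)) = ⊤ := by
  by_contra hspan
  obtain ⟨f, hf0, hfL⟩ :=
    Submodule.exists_dual_map_eq_bot_of_lt_top (lt_top_iff_ne_top.mpr hspan) inferInstance
  have hf : ∀ l ∈ L, f l = 0 := fun l hl => by
    simpa [hfL] using Submodule.mem_map_of_mem (f := f) (Submodule.subset_span hl)
  set w := ((dotForm n).toDual dotForm_nondegenerate).symm f
  have hw : ∀ v, dotR w v = f v :=
    LinearMap.BilinForm.apply_toDual_symm_apply (hB := dotForm_nondegenerate) f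
  have hww : dotR w w ≠ 0 := fun h =>
    hf0 (((dotForm n).toDual dotForm_nondegenerate).symm.map_eq_zero_iff.mp
      (dotProduct_self_eq_zero.mp h))
  have hmem (k : ℤ) : (k : ℝ) • w ∈ dualLattice L := fun l hl =>
    ⟨0, by rw [dotR_eq_dotProduct, smul_dotProduct, ← dotR_eq_dotProduct, hw, hf l hl]; simp⟩
  refine not_injective_infinite_finite (fun k : ℤ => mkQ L ⟨(k : ℝ) • w, hmem k⟩) ?_
  intro k j hkj
  have hL : ((j - k : ℤ) : ℝ) • w ∈ L := by
    have := (QuotientAddGroup.eq (s := L.addSubgroupOf (dualLattice L))).mp hkj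
    rw [AddSubgroup.mem_addSubgroupOf] at this
    convert this using 1
    push_cast
    rw [sub_smul]; abel
  have := hf _ hL
  rw [← hw, dotR_comm, dotR_eq_dotProduct, smul_dotProduct, ← dotR_eq_dotProduct, smul_eq_mul,
    mul_eq_zero] at this
  have : j - k = 0 := by exact_mod_cast this.resolve_right hww
  omega

theorem dualLattice_dualLattice [DiscreteTopology (AddSubgroup.toIntSubmodule L)]
    (hspan : Submodule.span ℝ (L : Set (Fin n → ℝ)) = ⊤) :
    dualLattice (dualLattice L) = L := by
  have : IsZLattice ℝ (AddSubgroup.toIntSubmodule L) := ⟨hspan⟩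
  apply AddSubgroup.toIntSubmodule.injective
  rw [toIntSubmodule_dualLattice, toIntSubmodule_dualLattice, ←
    (Module.Free.chooseBasis ℤ (AddSubgroup.toIntSubmodule L)).ofZLatticeBasis_span ℝ,
    LinearMap.BilinForm.dualSubmodule_dualSubmodule_of_basis _ dotForm_nondegenerate
      dotForm_isSymm]

end Lattice

section Characters

variable {n : ℕ}

def expDot (u v : Fin n → ℝ) : ℂ := exp (2 * Real.pi * I * dotR u v)

lemma expDot_comm (u v : Fin n → ℝ) : expDot u v = expDot v u := by
  rw [expDot, expDot, dotR_comm]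

lemma expDot_add_right (u v w : Fin n → ℝ) : expDot u (v + w) = expDot u v * expDot u w := by
  rw [expDot, dotR_add_right, ofReal_add, mul_add, exp_add, expDot, expDot]

lemma expDot_eq_one_iff {u v : Fin n → ℝ} : expDot u v = 1 ↔ ∃ m : ℤ, dotR u v = m := by
  rw [expDot, exp_eq_one_iff]
  refine exists_congr fun m => ⟨fun h => ?_, fun h => by rw [h]; push_cast; ring⟩
  have h2πI : 2 * (Real.pi : ℂ) * I ≠ 0 := by simp [Real.pi_ne_zero]
  exact_mod_cast mul_left_cancel₀ h2πI (h.trans (mul_comm _ _))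

lemma norm_expDot (u v : Fin n → ℝ) : ‖expDot u v‖ = 1 := by
  rw [expDot, norm_exp, show (2 * Real.pi * I * dotR u v).re = 0 by simp, Real.exp_zero]

lemma expDot_mul_conj (u v w : Fin n → ℝ) :
    expDot u w * (starRingEnd ℂ) (expDot v w) = expDot (u - v) w := by
  rw [expDot, expDot, expDot, ← exp_conj, ← exp_add]
  congr 1
  simp only [map_mul, conj_ofReal, conj_I, map_ofNat, dotR_eq_dotProduct, sub_dotProduct,
    ofReal_sub]
  ring

variable (L : AddSubgroup (Fin n → ℝ))

lemma expDot_eq_of_sub_mem {d u v : Fin n → ℝ} (hd : d ∈ dualLattice L) (h : u - v ∈ L) :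
    expDot d u = expDot d v := by
  obtain ⟨m, hm⟩ := hd _ h
  rw [← sub_add_cancel u v, expDot_add_right, expDot_eq_one_iff.mpr ⟨m, hm⟩, one_mul]

lemma coe_out_sub_coe_out_mem_iff {x y : latQuot L} :
    ((x.out : dualLattice L) : Fin n → ℝ) - (y.out : dualLattice L) ∈ L ↔ x = y := by
  rw [← AddSubgroup.coe_sub, ← AddSubgroup.mem_addSubgroupOf, ← QuotientAddGroup.eq_iff_sub_mem,
    QuotientAddGroup.out_eq', QuotientAddGroup.out_eq']

lemma expDot_out_mkQ {d : Fin n → ℝ} (hd : d ∈ dualLattice L) (v : dualLattice L) :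
    expDot d ((mkQ L v).out : dualLattice L) = expDot d v :=
  expDot_eq_of_sub_mem L hd (by
    rw [← AddSubgroup.coe_sub, ← AddSubgroup.mem_addSubgroupOf, ← QuotientAddGroup.eq_iff_sub_mem,
      QuotientAddGroup.out_eq']
    rfl)

def dualChar (d : dualLattice L) : AddChar (latQuot L) ℂ where
  toFun y := expDot (d : Fin n → ℝ) ((y.out : dualLattice L) : Fin n → ℝ)
  map_zero_eq_one' := by
    rw [show (0 : latQuot L) = mkQ L 0 from rfl, expDot_out_mkQ L d.2, ZeroMemClass.coe_zero,
      expDot_eq_one_iff]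
    exact ⟨0, by simp [dotR]⟩
  map_add_eq_mul' x y := by
    rw [show x + y = mkQ L (x.out + y.out) by simp [mkQ], expDot_out_mkQ L d.2,
      AddSubgroup.coe_add, expDot_add_right]

lemma dualChar_apply (d : dualLattice L) (y : latQuot L) :
    dualChar L d y = expDot (d : Fin n → ℝ) ((y.out : dualLattice L) : Fin n → ℝ) := rfl

lemma dualChar_eq_one_iff (d : dualLattice L) :
    dualChar L d = 1 ↔ (d : Fin n → ℝ) ∈ dualLattice (dualLattice L) := by
  refine ⟨fun h v hv => expDot_eq_one_iff.mp ?_, fun hd => AddChar.ext_iff.mpr fun y =>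
    expDot_eq_one_iff.mpr (hd _ (y.out : dualLattice L).2)⟩
  rw [← expDot_out_mkQ L d.2 ⟨v, hv⟩, ← dualChar_apply, h, AddChar.one_apply]

open scoped Classical in
lemma sum_dualChar [Fintype (latQuot L)] (d : dualLattice L) :
    ∑ y, dualChar L d y =
      if (d : Fin n → ℝ) ∈ dualLattice (dualLattice L) then (Fintype.card (latQuot L) : ℂ)
      else 0 := by
  split_ifs with hd
  · exact AddChar.sum_eq_card_of_eq_one ((dualChar_eq_one_iff L d).mpr hd)
  · exact AddChar.sum_eq_zero_of_ne_one (mt (dualChar_eq_one_iff L d).mp hd)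

end Characters

section Unitary

variable {ι : Type*} [Fintype ι] [DecidableEq ι]

theorem Matrix.apply_le_apply_of_commute_of_mul_conjTranspose_eq_one {S : Matrix ι ι ℂ}
    (hS : S * Sᴴ = 1) {c : ℝ} (hnorm : ∀ x y, ‖S x y‖ = c) {i₀ : ι} (hrow : ∀ y, S i₀ y = c)
    {Z : Matrix ι ι ℝ} (hZ : ∀ x y, 0 ≤ Z x y) (hZS : Commute (Z.map ofReal) S) (x y : ι) :
    Z x y ≤ Z i₀ i₀ := by
  set M := Z.map ofReal
  have hconj : M = S * M * Sᴴ := by rw [← hZS.eq, Matrix.mul_assoc, hS, Matrix.mul_one]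
  have hentry (x y : ι) : M x y = ∑ b, (∑ a, S x a * M a b) * star (S y b) := by
    conv_lhs => rw [hconj]
    simp only [mul_apply, conjTranspose_apply]
  set T := ∑ b, (∑ a, c * Z a b) * c
  have hdiag : (Z i₀ i₀ : ℂ) = T := by
    simpa [M, hrow, T] using hentry i₀ i₀
  have hbound : ‖M x y‖ ≤ T := by
    rw [hentry]
    refine (norm_sum_le _ _).trans (Finset.sum_le_sum fun b _ => ?_)
    rw [norm_mul, norm_star, hnorm]
    gcongr
    · exact hnorm x x ▸ norm_nonneg _
    refine (norm_sum_le _ _).trans (Finset.sum_le_sum fun a _ => ?_)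
    simp [M, hnorm, abs_of_nonneg (hZ a b)]
  calc Z x y ≤ ‖M x y‖ := by simp [M, le_abs_self]
    _ ≤ T := hbound
    _ = Z i₀ i₀ := by exact_mod_cast hdiag.symm

end Unitary

section Smat

variable {n : ℕ} (L : AddSubgroup (Fin n → ℝ)) [Fintype (latQuot L)]

lemma Smat_apply (x y : latQuot L) :
    Smat L x y = ((Real.sqrt (Fintype.card (latQuot L)))⁻¹ : ℝ) *
      expDot ((x.out : dualLattice L) : Fin n → ℝ) ((y.out : dualLattice L) : Fin n → ℝ) :=
  rfl

lemma norm_Smat (x y : latQuot L) :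
    ‖Smat L x y‖ = (Real.sqrt (Fintype.card (latQuot L)))⁻¹ := by
  rw [Smat_apply, norm_mul, norm_expDot, mul_one, norm_real, Real.norm_of_nonneg (by positivity)]

lemma Smat_zero_left (y : latQuot L) :
    Smat L 0 y = ((Real.sqrt (Fintype.card (latQuot L)))⁻¹ : ℝ) := by
  rw [Smat_apply, expDot_comm, ← dualChar_apply, AddChar.map_zero_eq_one, mul_one]

theorem Smat_mul_conjTranspose [DecidableEq (latQuot L)] (hL : dualLattice (dualLattice L) = L) :
    Smat L * (Smat L)ᴴ = 1 := by
  set c : ℝ := (Real.sqrt (Fintype.card (latQuot L)))⁻¹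
  have hc : c ^ 2 * Fintype.card (latQuot L) = 1 := by
    rw [inv_pow, Real.sq_sqrt (Nat.cast_nonneg _), inv_mul_cancel₀ (by simp)]
  ext x z
  let d : dualLattice L := x.out - z.out
  calc (Smat L * (Smat L)ᴴ) x z = ∑ y, ((c ^ 2 : ℝ) : ℂ) * dualChar L d y := by
        simp only [mul_apply, conjTranspose_apply, Smat_apply, RCLike.star_def, map_mul,
          conj_ofReal]
        refine Finset.sum_congr rfl fun y _ => ?_
        rw [dualChar_apply, AddSubgroup.coe_sub, ← expDot_mul_conj, ofReal_pow]
        ring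
    _ = (1 : Matrix (latQuot L) (latQuot L) ℂ) x z := by
        rw [← Finset.mul_sum, sum_dualChar, hL, AddSubgroup.coe_sub,
          coe_out_sub_coe_out_mem_iff, one_apply]
        split_ifs
        · exact_mod_cast hc
        · rw [mul_zero]

end Smat

theorem stmt_0_general {n : ℕ} (L : AddSubgroup (Fin n → ℝ))
    (hEven : IsEvenLattice L)
    [Fintype (latQuot L)]
    (Z : latQuot L → latQuot L → ℕ)
    (hZS : (Matrix.of fun x y => (Z x y : ℂ)) * Smat L
          = Smat L * Matrix.of fun x y => (Z x y : ℂ))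
    (hZ0 : Z 0 0 = 1) :
    ∀ x y, Z x y = 0 ∨ Z x y = 1 := by
  classical
  have := hEven.discreteTopology
  have hS := Smat_mul_conjTranspose L (dualLattice_dualLattice L (span_eq_top_of_finite_latQuot L))
  have hZR :
      (Matrix.of fun x y => (Z x y : ℝ)).map ofReal = Matrix.of fun x y => (Z x y : ℂ) := by
    ext; simp
  intro x y
  have hle : (Z x y : ℝ) ≤ Z 0 0 :=
    apply_le_apply_of_commute_of_mul_conjTranspose_eq_one hS (norm_Smat L) (Smat_zero_left L)
      (fun _ _ => Nat.cast_nonneg _) (hZR ▸ hZS) x y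
  have : Z x y ≤ 1 := by exact_mod_cast hZ0 ▸ hle
  omega

/-- Every entry of a modular invariant for the lattice chiral data is 0 or 1. -/
theorem stmt_0 {n : ℕ} (L : AddSubgroup (Fin n → ℝ))
    (hEven : IsEvenLattice L) (hLL : L ≤ dualLattice L)
    [Fintype (latQuot L)]
    (Z : latQuot L → latQuot L → ℕ)
    (hZS : (Matrix.of fun x y => (Z x y : ℂ)) * Smat L
          = Smat L * Matrix.of fun x y => (Z x y : ℂ))
    (hZ0 : Z 0 0 = 1) :
    ∀ x y, Z x y = 0 ∨ Z x y = 1 :=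
  stmt_0_general L hEven Z hZS hZ0

end
end

section
/- Additivity of torus modular invariants: with notation as above, if Z is a nonnegative-integer matrix with ZS = SZ, Z_{[0],[0]}=1, and all entries in {0,1}, then Z_{[u],[v]} = 1 and Z_{[u'],[v']} = 1 imply Z_{[u+u'],[v+v']} = 1. -/
/-!
STATEMENT 1: Additivity of torus modular invariants.

-/

open scoped BigOperators
open Complex

noncomputable section

/-!
The pairing `([a], [b]) ↦ exp (2πi a·b)` is a bicharacter `ψ` of `L*/L`, and it is nondegenerate
because `L** = L`: finiteness of `L*/L` forces `L` to span (a vector orthogonal to `L` lies in `L*`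
with all its real multiples), and `L ⊆ L*` then makes `L` discrete, i.e. a full lattice.
Since `S` is a multiple of `ψ`, orthogonality of characters turns `ZS = SZ` into
`|L*/L| Z_{x,y} = ∑_{a,b} Z_{a,b} ψ(x,a) ψ(-y,b)`. At `(0,0)` this says `∑ Z_{a,b} = |L*/L|`;
at `(u,v)` with `Z_{u,v} = 1` the same total is a sum of terms of modulus at most `Z_{a,b}`, so
`ψ(u,a) = ψ(v,b)` whenever `Z_{a,b} ≠ 0`. Multiplying these equalities for `(u,v)` and `(u',v')`
makes every term of the sum at `(u+u',v+v')` equal to `Z_{a,b}`, whence `Z_{u+u',v+v'} = 1`.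
-/

lemma Complex.eq_one_of_norm_le_one_of_re_eq_one {z : ℂ} (hz : ‖z‖ ≤ 1) (hre : z.re = 1) :
    z = 1 := by
  have h := Complex.sq_norm z
  rw [Complex.normSq_apply, hre] at h
  have him : z.im = 0 := by nlinarith [norm_nonneg z]
  exact Complex.ext hre him

lemma Complex.eq_one_of_sum_mul_eq_sum {ι : Type*} {s : Finset ι} {w : ι → ℝ} {z : ι → ℂ}
    (hw : ∀ i ∈ s, 0 ≤ w i) (hz : ∀ i ∈ s, ‖z i‖ ≤ 1)
    (h : ∑ i ∈ s, (w i : ℂ) * z i = ∑ i ∈ s, (w i : ℂ)) {i : ι} (hi : i ∈ s) (hwi : w i ≠ 0) :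
    z i = 1 := by
  have hre : ∑ j ∈ s, w j * (1 - (z j).re) = 0 := by
    have := congrArg Complex.re h
    simp only [Complex.re_sum, Complex.re_ofReal_mul, Complex.ofReal_re] at this
    simp [mul_sub, Finset.sum_sub_distrib, this]
  have hterm := (Finset.sum_eq_zero_iff_of_nonneg fun j hj =>
    mul_nonneg (hw j hj) (sub_nonneg.2 ((Complex.re_le_norm _).trans (hz j hj)))).1 hre i hi
  refine Complex.eq_one_of_norm_le_one_of_re_eq_one (hz i hi) ?_
  linarith [(mul_eq_zero.1 hterm).resolve_left hwi]

lemma Complex.exp_two_pi_I_mul_ofReal_eq_one_iff (t : ℝ) :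
    Complex.exp (2 * Real.pi * Complex.I * t) = 1 ↔ ∃ m : ℤ, t = m := by
  rw [Complex.exp_eq_one_iff]
  refine exists_congr fun m => ?_
  rw [show (m : ℂ) * (2 * Real.pi * Complex.I) = 2 * Real.pi * Complex.I * ((m : ℝ) : ℂ) by
    push_cast; ring, mul_right_inj' Complex.two_pi_I_ne_zero, Complex.ofReal_inj]

namespace AddChar

variable {G : Type*} [AddCommGroup G] (ψ : AddChar G (AddChar G ℂ))

lemma injective_of_apply_eq_one (h : ∀ x, ψ x = 1 → x = 0) : Function.Injective ψ := by
  intro x y hxy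
  refine sub_eq_zero.1 (h _ ?_)
  rw [sub_eq_add_neg, map_add_eq_mul, map_neg_eq_inv, hxy, mul_inv_cancel]

lemma apply_mul_apply_neg_eq_one (x b : G) : ψ x b * ψ (-x) b = 1 := by
  rw [← mul_apply, ← map_add_eq_mul, add_neg_cancel, map_zero_eq_one, one_apply]

def toMatrix : Matrix G G ℂ := Matrix.of fun x y => ψ x y

variable [Fintype G]

lemma sum_apply_mul_apply_neg [DecidableEq G] (hψ : Function.Injective ψ) (a y : G) :
    ∑ b, ψ a b * ψ (-y) b = if a = y then (Fintype.card G : ℂ) else 0 := by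
  classical
  simp_rw [← mul_apply, ← map_add_eq_mul, sum_eq_ite, ← sub_eq_add_neg, ← one_eq_zero,
    ← map_zero_eq_one ψ, hψ.eq_iff, sub_eq_zero]

lemma sum_sum_mul_apply_mul_apply_neg (hψ : Function.Injective ψ) {Z : Matrix G G ℂ}
    (hZ : Commute Z ψ.toMatrix) (x y : G) :
    ∑ a, ∑ b, Z a b * (ψ x a * ψ (-y) b) = Fintype.card G * Z x y := by
  classical
  have hcol : ∀ b, ∑ a, ψ x a * Z a b = ∑ a, Z x a * ψ a b := fun b => by
    simpa [Matrix.mul_apply, toMatrix] using (congrFun (congrFun hZ.eq x) b).symm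
  calc ∑ a, ∑ b, Z a b * (ψ x a * ψ (-y) b)
      = ∑ b, (∑ a, ψ x a * Z a b) * ψ (-y) b := by
        rw [Finset.sum_comm]
        simp_rw [Finset.sum_mul]
        exact Finset.sum_congr rfl fun _ _ => Finset.sum_congr rfl fun _ _ => by ring
    _ = ∑ a, Z x a * ∑ b, ψ a b * ψ (-y) b := by
        simp_rw [hcol, Finset.sum_mul, Finset.mul_sum]
        rw [Finset.sum_comm]
        exact Finset.sum_congr rfl fun _ _ => Finset.sum_congr rfl fun _ _ => by ring
    _ = Fintype.card G * Z x y := by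
        simp [sum_apply_mul_apply_neg ψ hψ, mul_comm]

variable {ψ}

lemma sum_sum_eq_card_mul_apply_zero (hψ : Function.Injective ψ) {Z : Matrix G G ℂ}
    (hZ : Commute Z ψ.toMatrix) :
    ∑ a, ∑ b, Z a b = Fintype.card G * Z 0 0 := by
  simpa using sum_sum_mul_apply_mul_apply_neg ψ hψ hZ 0 0

lemma apply_eq_apply_of_ne_zero (hψ : Function.Injective ψ) {Z : G → G → ℕ}
    (hZ : Commute (Matrix.of fun x y => (Z x y : ℂ)) ψ.toMatrix)
    (hZ0 : Z 0 0 = 1) {u v : G} (huv : Z u v = 1) {a b : G} (hab : Z a b ≠ 0) :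
    ψ u a = ψ v b := by
  have hsum : ∑ p : G × G, ((Z p.1 p.2 : ℝ) : ℂ) * (ψ u p.1 * ψ (-v) p.2)
      = ∑ p : G × G, ((Z p.1 p.2 : ℝ) : ℂ) := by
    have h₁ := sum_sum_mul_apply_mul_apply_neg ψ hψ hZ u v
    have h₀ := sum_sum_eq_card_mul_apply_zero hψ hZ
    simp only [Matrix.of_apply, huv, hZ0] at h₁ h₀
    simp only [Complex.ofReal_natCast, Fintype.sum_prod_type]
    rw [h₁, h₀]
  have h := Complex.eq_one_of_sum_mul_eq_sum (fun p _ => Nat.cast_nonneg _)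
    (fun p _ => by simp) hsum (Finset.mem_univ (a, b)) (by exact_mod_cast hab)
  rwa [map_neg_eq_inv, inv_apply', mul_inv_eq_one₀ ((ψ v).val_isUnit b).ne_zero] at h

theorem apply_add_add_eq_one_of_commute (hψ : Function.Injective ψ) {Z : G → G → ℕ}
    (hZ : Commute (Matrix.of fun x y => (Z x y : ℂ)) ψ.toMatrix)
    (hZ0 : Z 0 0 = 1) {u v u' v' : G} (h : Z u v = 1) (h' : Z u' v' = 1) :
    Z (u + u') (v + v') = 1 := by
  have hterm : ∀ a b, (Z a b : ℂ) * (ψ (u + u') a * ψ (-(v + v')) b) = Z a b := fun a b => by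
    by_cases hab : Z a b = 0
    · simp [hab]
    · rw [map_add_eq_mul, mul_apply, apply_eq_apply_of_ne_zero hψ hZ hZ0 h hab,
        apply_eq_apply_of_ne_zero hψ hZ hZ0 h' hab, ← mul_apply, ← map_add_eq_mul,
        apply_mul_apply_neg_eq_one, mul_one]
  have key := sum_sum_mul_apply_mul_apply_neg ψ hψ hZ (u + u') (v + v')
  have hmass := sum_sum_eq_card_mul_apply_zero hψ hZ
  simp only [Matrix.of_apply, hterm] at key hmass
  rw [hmass, hZ0] at key
  exact_mod_cast (mul_left_cancel₀ (Nat.cast_ne_zero.2 Fintype.card_ne_zero) key).symm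

end AddChar

namespace TorusLattice

variable {n : ℕ}

lemma dotR_comm (u v : Fin n → ℝ) : dotR u v = dotR v u :=
  dotProduct_comm u v

def dotBilin (n : ℕ) : LinearMap.BilinForm ℝ (Fin n → ℝ) := dotProductBilin ℝ ℝ

lemma dotBilin_apply (u v : Fin n → ℝ) : dotBilin n u v = dotR u v := rfl

lemma dotBilin_nondegenerate : (dotBilin n).Nondegenerate := by
  refine ⟨fun x hx => ?_, fun x hx => ?_⟩ <;> exact dotProduct_self_eq_zero.1 (hx x)

lemma dotBilin_isSymm : (dotBilin n).IsSymm :=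
  ⟨fun u v => dotR_comm u v⟩

variable (L : AddSubgroup (Fin n → ℝ))

lemma toIntSubmodule_dualLattice :
    (dualLattice L).toIntSubmodule = (dotBilin n).dualSubmodule L.toIntSubmodule := by
  ext x
  refine forall₂_congr fun l _ => ?_
  simp only [Submodule.mem_one, algebraMap_int_eq, eq_intCast, dotBilin_apply, eq_comm]

lemma card_nsmul_mem [Fintype (latQuot L)] {x : Fin n → ℝ} (hx : x ∈ dualLattice L) :
    Fintype.card (latQuot L) • x ∈ L := by
  have h := card_nsmul_eq_zero (x := (QuotientAddGroup.mk ⟨x, hx⟩ : latQuot L))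
  rw [← QuotientAddGroup.mk_nsmul, QuotientAddGroup.eq_zero_iff,
    AddSubgroup.mem_addSubgroupOf] at h
  exact h

lemma span_eq_top [Fintype (latQuot L)] : Submodule.span ℝ (L : Set (Fin n → ℝ)) = ⊤ := by
  set W := Submodule.span ℝ (L : Set (Fin n → ℝ))
  have hW : (dotBilin n).orthogonal W = ⊥ := by
    refine (Submodule.eq_bot_iff _).2 fun w hw => ?_
    set N := Fintype.card (latQuot L)
    have hdual : (N : ℝ)⁻¹ • w ∈ dualLattice L := fun l hl =>
      ⟨0, by rw [← dotBilin_apply, map_smul, LinearMap.smul_apply, dotBilin_isSymm.eq,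
        hw l (Submodule.subset_span hl)]; simp⟩
    have hwL : w ∈ L := by
      simpa [← Nat.cast_smul_eq_nsmul ℝ, smul_smul, Fintype.card_ne_zero, N] using
        card_nsmul_mem L hdual
    exact dotProduct_self_eq_zero.1 (hw w (Submodule.subset_span hwL))
  rw [← (dotBilin n).orthogonal_orthogonal dotBilin_nondegenerate dotBilin_isSymm.isRefl W, hW,
    LinearMap.BilinForm.orthogonal_bot]

variable {L}

lemma discreteTopology_toIntSubmodule (hLL : L ≤ dualLattice L)
    (hspan : Submodule.span ℝ (L : Set (Fin n → ℝ)) = ⊤) : DiscreteTopology L.toIntSubmodule := by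
  classical
  -- `L ⊆ L* ⊆ M*` for the lattice `M ⊆ L` spanned by a real basis taken from `L`, and `M*` is
  -- spanned over `ℤ` by the dual basis, hence discrete.
  let b := Module.Basis.ofSpan hspan.ge
  have : Finite _ := Module.Finite.finite_basis b
  have hb : Submodule.span ℤ (Set.range b) ≤ L.toIntSubmodule :=
    Submodule.span_le.2 (Module.Basis.ofSpan_subset hspan.ge)
  have hL : L.toIntSubmodule ≤ Submodule.span ℤ
      (Set.range ((dotBilin n).dualBasis dotBilin_nondegenerate b)) := by
    rw [← LinearMap.BilinForm.dualSubmodule_span_of_basis]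
    intro x hx y hy
    exact (toIntSubmodule_dualLattice L ▸ AddSubgroup.toIntSubmodule.monotone hLL) hx y (hb hy)
  exact DiscreteTopology.of_subset (inferInstanceAs (DiscreteTopology (Submodule.span ℤ _))) hL

lemma dualLattice_dualLattice (hLL : L ≤ dualLattice L) [Fintype (latQuot L)] :
    dualLattice (dualLattice L) = L := by
  have := discreteTopology_toIntSubmodule hLL (span_eq_top L)
  have : IsZLattice ℝ L.toIntSubmodule := ⟨span_eq_top L⟩
  apply AddSubgroup.toIntSubmodule.injective
  rw [toIntSubmodule_dualLattice, toIntSubmodule_dualLattice,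
    ← (Module.Free.chooseBasis ℤ L.toIntSubmodule).ofZLatticeBasis_span ℝ,
    LinearMap.BilinForm.dualSubmodule_dualSubmodule_of_basis _ dotBilin_nondegenerate
      dotBilin_isSymm]

variable (L)

lemma exp_dotR_eq_of_sub_mem {a a' b b' : Fin n → ℝ} (ha : a ∈ dualLattice L)
    (hb' : b' ∈ dualLattice L) (haa' : a' - a ∈ L) (hbb' : b' - b ∈ L) :
    Complex.exp (2 * Real.pi * Complex.I * dotR a' b') =
      Complex.exp (2 * Real.pi * Complex.I * dotR a b) := by
  obtain ⟨m₁, hm₁⟩ := hb' _ haa'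
  obtain ⟨m₂, hm₂⟩ := ha _ hbb'
  have hsplit : dotR a' b' = dotR a b + m₁ + m₂ := by
    rw [← hm₁, ← hm₂, dotR_comm b']
    change a' ⬝ᵥ b' = a ⬝ᵥ b + (a' - a) ⬝ᵥ b' + a ⬝ᵥ (b' - b)
    simp only [sub_dotProduct, dotProduct_sub]
    ring
  rw [hsplit, Complex.ofReal_add, Complex.ofReal_add, mul_add, mul_add, Complex.exp_add,
    Complex.exp_add, (Complex.exp_two_pi_I_mul_ofReal_eq_one_iff _).2 ⟨m₁, rfl⟩,
    (Complex.exp_two_pi_I_mul_ofReal_eq_one_iff _).2 ⟨m₂, rfl⟩, mul_one, mul_one]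

def pairingExp (x y : latQuot L) : ℂ :=
  Complex.exp (2 * Real.pi * Complex.I *
    dotR ((Quotient.out x : dualLattice L) : Fin n → ℝ)
      ((Quotient.out y : dualLattice L) : Fin n → ℝ))

lemma out_sub_mem (a : dualLattice L) :
    ((Quotient.out (a : latQuot L) : dualLattice L) : Fin n → ℝ) - a ∈ L := by
  obtain ⟨l, hl⟩ := QuotientAddGroup.mk_out_eq_add (L.addSubgroupOf (dualLattice L)) a
  rw [hl, AddSubgroup.coe_add, add_sub_cancel_left]
  exact AddSubgroup.mem_addSubgroupOf.1 l.2

lemma pairingExp_mk (a b : dualLattice L) :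
    pairingExp L a b = Complex.exp (2 * Real.pi * Complex.I * dotR (a : Fin n → ℝ) b) :=
  exp_dotR_eq_of_sub_mem L a.2 (Quotient.out (b : latQuot L)).2 (out_sub_mem L a)
    (out_sub_mem L b)

lemma pairingExp_comm (x y : latQuot L) : pairingExp L x y = pairingExp L y x := by
  rw [pairingExp, pairingExp, dotR_comm]

lemma pairingExp_zero_left (y : latQuot L) : pairingExp L 0 y = 1 := by
  induction y using QuotientAddGroup.induction_on with | H b => ?_
  rw [← QuotientAddGroup.mk_zero, pairingExp_mk]
  simp [dotR]

lemma pairingExp_add_left (x y z : latQuot L) :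
    pairingExp L (x + y) z = pairingExp L x z * pairingExp L y z := by
  induction x using QuotientAddGroup.induction_on with | H a => ?_
  induction y using QuotientAddGroup.induction_on with | H b => ?_
  induction z using QuotientAddGroup.induction_on with | H c => ?_
  rw [← QuotientAddGroup.mk_add, pairingExp_mk, pairingExp_mk, pairingExp_mk, ← Complex.exp_add,
    AddSubgroup.coe_add, dotR_add_left, Complex.ofReal_add, mul_add]

def latticePairing : AddChar (latQuot L) (AddChar (latQuot L) ℂ) where
  toFun x :=
    { toFun := pairingExp L x
      map_zero_eq_one' := by rw [pairingExp_comm, pairingExp_zero_left]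
      map_add_eq_mul' y z := by simp only [pairingExp_comm L x, pairingExp_add_left] }
  map_zero_eq_one' := AddChar.ext _ _ <| pairingExp_zero_left L
  map_add_eq_mul' x y := AddChar.ext _ _ <| pairingExp_add_left L x y

lemma latticePairing_mk (a b : dualLattice L) :
    latticePairing L a b = Complex.exp (2 * Real.pi * Complex.I * dotR (a : Fin n → ℝ) b) :=
  pairingExp_mk L a b

variable {L}

lemma latticePairing_injective (hLL : L ≤ dualLattice L) [Fintype (latQuot L)] :
    Function.Injective (latticePairing L) := by
  refine AddChar.injective_of_apply_eq_one _ fun x hx => ?_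
  induction x using QuotientAddGroup.induction_on with | H a => ?_
  have ha : (a : Fin n → ℝ) ∈ dualLattice (dualLattice L) := fun y hy => by
    have h := DFunLike.congr_fun hx ((⟨y, hy⟩ : dualLattice L) : latQuot L)
    rwa [latticePairing_mk, AddChar.one_apply, Complex.exp_two_pi_I_mul_ofReal_eq_one_iff] at h
  rw [dualLattice_dualLattice hLL] at ha
  exact (QuotientAddGroup.eq_zero_iff _).2 (AddSubgroup.mem_addSubgroupOf.2 ha)

variable (L)

lemma Smat_eq_smul [Fintype (latQuot L)] :
    Smat L = (((Real.sqrt (Fintype.card (latQuot L)))⁻¹ : ℝ) : ℂ) • (latticePairing L).toMatrix :=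
  rfl

end TorusLattice

open TorusLattice in
theorem stmt_1_general {n : ℕ} (L : AddSubgroup (Fin n → ℝ))
    (hLL : L ≤ dualLattice L)
    [Fintype (latQuot L)]
    (Z : latQuot L → latQuot L → ℕ)
    (hZS : (Matrix.of fun x y => (Z x y : ℂ)) * Smat L
          = Smat L * Matrix.of fun x y => (Z x y : ℂ))
    (hZ0 : Z 0 0 = 1) :
    ∀ u v u' v' : latQuot L,
      Z u v = 1 → Z u' v' = 1 → Z (u + u') (v + v') = 1 := by
  intro u v u' v' h h'
  have hc : (((Real.sqrt (Fintype.card (latQuot L)))⁻¹ : ℝ) : ℂ) ≠ 0 := by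
    simp [Fintype.card_ne_zero]
  rw [Smat_eq_smul, Matrix.mul_smul, Matrix.smul_mul] at hZS
  exact AddChar.apply_add_add_eq_one_of_commute (ψ := latticePairing L)
    (latticePairing_injective hLL) (smul_right_injective _ hc hZS) hZ0 h h'

/-- Additivity of torus modular invariants: if `Z` is a `{0,1}`-valued
nonnegative-integer matrix commuting with `S` and with `Z_{[0],[0]} = 1`, then
`Z_{[u],[v]} = 1` and `Z_{[u'],[v']} = 1` imply `Z_{[u+u'],[v+v']} = 1`. -/
theorem stmt_1 {n : ℕ} (L : AddSubgroup (Fin n → ℝ))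
    (hEven : IsEvenLattice L) (hLL : L ≤ dualLattice L)
    [Fintype (latQuot L)]
    (Z : latQuot L → latQuot L → ℕ)
    (hZS : (Matrix.of fun x y => (Z x y : ℂ)) * Smat L
          = Smat L * Matrix.of fun x y => (Z x y : ℂ))
    (hZ0 : Z 0 0 = 1)
    (h01 : ∀ x y, Z x y = 0 ∨ Z x y = 1) :
    ∀ u v u' v' : latQuot L,
      Z u v = 1 → Z u' v' = 1 → Z (u + u') (v + v') = 1 :=
  stmt_1_general L hLL Z hZS hZ0

end
end

section
/- Simple-current symmetry of fusion coefficients: if j and j' are simple-currents in a modular tensor category (fusion ring with Verlinde formula), then N_{jλ, j'μ}^{jj'ν} = N_{λ,μ}^ν for all primaries λ, μ, ν. -/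
/-!
STATEMENT 11: simple-current symmetry of fusion coefficients:
`N_{jλ, j'μ}^{j j' ν} = N_{λ,μ}^ν` for simple-currents `j`, `j'`.
-/

open scoped BigOperators
open Complex

noncomputable section

theorem stmt_11 {Φ : Type} [Fintype Φ] [DecidableEq Φ]
    (S : Matrix Φ Φ ℂ) (one : Φ)
    (hsym : S.transpose = S)
    (huni : S * S.conjTranspose = 1)
    (hS1 : ∀ ρ, S one ρ ≠ 0)
    -- the fusion coefficients, given by the Verlinde formula
    (N : Φ → Φ → Φ → ℂ)
    (hverl : ∀ lam mu nu, N lam mu nu =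
      ∑ ρ, S lam ρ * S mu ρ * (starRingEnd ℂ) (S nu ρ) / S one ρ)
    -- `j` and `j'` are simple-currents: they act by permutations `σ`, `σ'`
    -- with monodromy charges `Q`, `Q'`, and have quantum dimension 1
    (σ σ' : Equiv.Perm Φ) (Q Q' : Φ → ℝ)
    (hσ : ∀ lam mu, S (σ lam) mu
        = Complex.exp (2 * Real.pi * Complex.I * Q mu) * S lam mu)
    (hσ' : ∀ lam mu, S (σ' lam) mu
        = Complex.exp (2 * Real.pi * Complex.I * Q' mu) * S lam mu)
    (hqd : S (σ one) one = S one one)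
    (hqd' : S (σ' one) one = S one one) :
    ∀ lam mu nu, N (σ lam) (σ' mu) (σ (σ' nu)) = N lam mu nu := by
  intro lam mu nu
  rw [hverl, hverl]
  refine Finset.sum_congr rfl fun ρ _ => ?_
  rw [hσ, hσ', hσ, hσ']
  have hconj : ∀ (q : ℝ),
      (starRingEnd ℂ) (Complex.exp (2 * Real.pi * Complex.I * q))
        = Complex.exp (-(2 * Real.pi * Complex.I * q)) := by
    intro q
    rw [← Complex.exp_conj]
    congr 1
    rw [map_mul, map_mul, map_mul, Complex.conj_I, Complex.conj_ofReal,
      Complex.conj_ofReal, map_ofNat]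
    ring
  rw [map_mul, map_mul, hconj, hconj]
  have h1 : Complex.exp (2 * Real.pi * Complex.I * Q ρ) *
      Complex.exp (-(2 * Real.pi * Complex.I * Q ρ)) = 1 := by
    rw [← Complex.exp_add]; simp
  have h2 : Complex.exp (2 * Real.pi * Complex.I * Q' ρ) *
      Complex.exp (-(2 * Real.pi * Complex.I * Q' ρ)) = 1 := by
    rw [← Complex.exp_add]; simp
  congr 1
  linear_combination (S lam ρ * S mu ρ * (starRingEnd ℂ) (S nu ρ) *
      Complex.exp (-(2 * Real.pi * Complex.I * Q' ρ)) *
      Complex.exp (2 * Real.pi * Complex.I * Q' ρ)) * h1 +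
    (S lam ρ * S mu ρ * (starRingEnd ℂ) (S nu ρ)) * h2

end
end

section
/- A nimrep matrix associated to a simple-current is a permutation matrix: if j is a simple-current of the fusion ring and (N_λ) is a nimrep, then N_j is a permutation matrix. -/
/-!
STATEMENT 12: the nimrep matrix associated to a simple-current is a
permutation matrix.
-/

open scoped BigOperators
open Complex

noncomputable section

lemma aux_sum_sq_eq_one {B : Type} [Fintype B] [DecidableEq B] (f : B → ℕ)
    (h : ∑ y, f y * f y = 1) : ∃ a, f a = 1 ∧ ∀ b, b ≠ a → f b = 0 := by
  have h0 : ∑ y, f y * f y ≠ 0 := by omega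
  obtain ⟨a, -, ha⟩ := Finset.exists_ne_zero_of_sum_ne_zero h0
  have ha' : 1 ≤ f a := Nat.one_le_iff_ne_zero.mpr (by intro h'; simp [h'] at ha)
  have hsplit : f a * f a + ∑ y ∈ Finset.univ.erase a, f y * f y = 1 := by
    rw [← h]
    simpa using Finset.add_sum_erase Finset.univ (fun y => f y * f y) (Finset.mem_univ a)
  have hle : f a ≤ f a * f a := Nat.le_mul_of_pos_left (f a) ha'
  have hfa : f a = 1 := by omega
  rw [hfa] at hsplit
  have hrest : ∑ y ∈ Finset.univ.erase a, f y * f y = 0 := by omega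
  refine ⟨a, hfa, fun b hb => ?_⟩
  have := (Finset.sum_eq_zero_iff.mp hrest) b (by simp [hb])
  simpa using this

theorem stmt_12 {Φ : Type} [Fintype Φ] [DecidableEq Φ]
    (S : Matrix Φ Φ ℂ) (one : Φ)
    (hsym : S.transpose = S)
    (huni : S * S.conjTranspose = 1)
    (hS1 : ∀ ρ, S one ρ ≠ 0)
    -- the fusion coefficients
    (Nf : Φ → Φ → Φ → ℕ)
    (hverl : ∀ lam mu nu, (Nf lam mu nu : ℂ) =
      ∑ ρ, S lam ρ * S mu ρ * (starRingEnd ℂ) (S nu ρ) / S one ρ)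
    -- `j` is a simple-current: it acts by a permutation `σ` with monodromy
    -- charge `Q`, has quantum dimension 1, and `j = σ(1)`
    (j : Φ) (σ : Equiv.Perm Φ) (Q : Φ → ℝ)
    (hσ : ∀ lam mu, S (σ lam) mu
        = Complex.exp (2 * Real.pi * Complex.I * Q mu) * S lam mu)
    (hqd : S j one = S one one)
    (hj : σ one = j)
    -- a nimrep `(N_λ)` with boundary states `B` ...
    (B : Type) [Fintype B] [DecidableEq B]
    (Nmat : Φ → Matrix B B ℕ)
    (hfus : ∀ lam mu, Nmat lam * Nmat mu = ∑ nu, Nf lam mu nu • Nmat nu)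
    -- ... simultaneously diagonalized by a unitary `Ψ` with eigenvalues
    -- `S_{λ,μ}/S_{1,μ}` over the exponents `ε : B → Φ`
    (Ψ : Matrix B B ℂ) (ε : B → Φ)
    (hΨ : Ψ * Ψ.conjTranspose = 1 ∧ Ψ.conjTranspose * Ψ = 1)
    (hdiag : ∀ lam, (Nmat lam).map (Nat.cast : ℕ → ℂ)
        = Ψ * Matrix.diagonal (fun x => S lam (ε x) / S one (ε x)) * Ψ.conjTranspose) :
    -- then `N_j` is a permutation matrix
    ∃ τ : Equiv.Perm B, ∀ x y, Nmat j x y = if y = τ x then 1 else 0 := by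
  classical
  set d : B → ℂ := fun x => S j (ε x) / S one (ε x) with hd
  -- the eigenvalues are phases
  have hdval : ∀ x, d x = Complex.exp (2 * Real.pi * Complex.I * Q (ε x)) := by
    intro x
    have h1 := hσ one (ε x)
    rw [hj] at h1
    rw [hd]
    simp only [h1]
    rw [mul_div_assoc, div_self (hS1 _), mul_one]
  have hdunit : ∀ x, d x * star (d x) = 1 := by
    intro x
    rw [hdval x, Complex.star_def]
    rw [← Complex.exp_conj, ← Complex.exp_add]
    have : (starRingEnd ℂ) (2 * Real.pi * Complex.I * Q (ε x))
        = -(2 * Real.pi * Complex.I * Q (ε x)) := by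
      simp only [map_mul, Complex.conj_ofReal, Complex.conj_I, map_ofNat]
      ring
    rw [this, add_neg_cancel, Complex.exp_zero]
  set M : Matrix B B ℂ := (Nmat j).map (Nat.cast : ℕ → ℂ) with hM
  have hMdiag : M = Ψ * Matrix.diagonal d * Ψ.conjTranspose := hdiag j
  have hMH : M.conjTranspose = Ψ * Matrix.diagonal (star d) * Ψ.conjTranspose := by
    rw [hMdiag]
    simp [Matrix.conjTranspose_mul, Matrix.diagonal_conjTranspose, Matrix.mul_assoc]
  have hMM : M * M.conjTranspose = 1 := by
    rw [hMH, hMdiag]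
    calc Ψ * Matrix.diagonal d * Ψ.conjTranspose *
          (Ψ * Matrix.diagonal (star d) * Ψ.conjTranspose)
        = Ψ * (Matrix.diagonal d * (Ψ.conjTranspose * Ψ) * Matrix.diagonal (star d)) *
            Ψ.conjTranspose := by
          simp only [Matrix.mul_assoc]
      _ = Ψ * (Matrix.diagonal d * Matrix.diagonal (star d)) * Ψ.conjTranspose := by
          rw [hΨ.2, Matrix.mul_one]
      _ = Ψ * Ψ.conjTranspose := by
          rw [Matrix.diagonal_mul_diagonal]
          have : (fun x => d x * star d x) = fun _ => (1 : ℂ) := by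
            funext x; exact hdunit x
          rw [this, Matrix.diagonal_one, Matrix.mul_one]
      _ = 1 := hΨ.1
  -- orthogonality of rows in ℕ
  have key : ∀ x x', (∑ y, Nmat j x y * Nmat j x' y) = if x = x' then 1 else 0 := by
    intro x x'
    have h1 : (M * M.conjTranspose) x x' = (1 : Matrix B B ℂ) x x' := by rw [hMM]
    have h2 : (M * M.conjTranspose) x x'
        = ((∑ y, Nmat j x y * Nmat j x' y : ℕ) : ℂ) := by
      simp [Matrix.mul_apply, Matrix.conjTranspose_apply, hM, Matrix.map_apply]
    rw [h2, Matrix.one_apply] at h1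
    have : ((∑ y, Nmat j x y * Nmat j x' y : ℕ) : ℂ)
        = ((if x = x' then 1 else 0 : ℕ) : ℂ) := by
      rw [h1]; split <;> simp
    exact_mod_cast this
  -- each row has a unique 1
  have hrow : ∀ x, ∃ a, Nmat j x a = 1 ∧ ∀ b, b ≠ a → Nmat j x b = 0 := by
    intro x
    apply aux_sum_sq_eq_one
    have := key x x
    simpa using this
  choose f hf1 hf0 using hrow
  have hinj : Function.Injective f := by
    intro x x' hxx'
    by_contra hne
    have h0 := key x x'
    rw [if_neg hne] at h0
    have : Nmat j x (f x) * Nmat j x' (f x) = 0 :=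
      Finset.sum_eq_zero_iff.mp h0 (f x) (Finset.mem_univ _)
    rw [hf1 x, one_mul, hxx', hf1 x'] at this
    exact one_ne_zero this
  let τ : Equiv.Perm B := Equiv.ofBijective f (Finite.injective_iff_bijective.mp hinj)
  refine ⟨τ, fun x y => ?_⟩
  have hτ : τ x = f x := rfl
  rw [hτ]
  by_cases hy : y = f x
  · rw [if_pos hy, hy, hf1]
  · rw [if_neg hy, hf0 x y hy]

end
end

section
/- Charge-group of the Verlinde nimrep: for the Verlinde nimrep N_λ of Ver_k(G) (fusion ring R_G/I_k(G) with basis the primaries), any solution (q, M) of the charge equations dim(λ̄) q_x ≡ Σ_y N_{λ,x}^y q_y (mod M) satisfies q_λ = q_1 · dim(λ̄) (mod M), and the universal solution (charge-group) is Z_{M̃} where M̃ = gcd of dim(μ̄) over all μ̄ in the fusion ideal I_k(G); in particular every charge-group of any nimrep of Ver_k(G) is M̃-torsion. -/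
/-!
Through the basis `[ℓ λ]` of `R/I`, a nimrep `N_λ` extends to a ring map `ρ : R → R/I → Mat_B(ℤ)`.
The charge equations say that `q mod M` is a common eigenvector of the `ρ(ℓ λ)` with eigenvalues
`D(ℓ λ)`; the `r` for which `ρ r q ≡ D r • q` form a subring, hence all of `R` since the `ℓ λ`
generate. An `r ∈ I` with `D r = M̃` has `ρ r = 0`, so `M ∣ M̃ q_x`. For the Verlinde nimrep
itself (the transposed left-regular representation) with `q = dim` and `x = 1`, this gives
`M ∣ M̃`.
-/

open Matrix

namespace Module.Basis

variable {K A S ι : Type*} [CommSemiring K] [Semiring A] [Algebra K A] [Semiring S] [Algebra K S]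

theorem map_mul_of_map_mul_basis (b : Basis ι K A) (f : A →ₗ[K] S)
    (h : ∀ i j, f (b i * b j) = f (b i) * f (b j)) (x y : A) : f (x * y) = f x * f y := by
  have : (LinearMap.mul K A).compr₂ f = (LinearMap.mul K S).compl₁₂ f f :=
    LinearMap.ext_basis b b h
  exact LinearMap.congr_fun₂ this x y

variable [Fintype ι]

noncomputable def constrAlgHom (b : Basis ι K A) (m : ι → S) (c : ι → ι → ι → K) (i₀ : ι)
    (hb : ∀ i j, b i * b j = ∑ k, c i j k • b k) (hm : ∀ i j, m i * m j = ∑ k, c i j k • m k)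
    (hb₁ : b i₀ = 1) (hm₁ : m i₀ = 1) : A →ₐ[K] S :=
  AlgHom.ofLinearMap (b.constr K m) (by rw [← hb₁, constr_basis, hm₁]) <|
    b.map_mul_of_map_mul_basis _ fun i j => by
      simp only [hb, map_sum, map_smul, constr_basis, hm]

theorem constrAlgHom_basis (b : Basis ι K A) (m : ι → S) (c : ι → ι → ι → K) (i₀ : ι)
    (hb : ∀ i j, b i * b j = ∑ k, c i j k • b k) (hm : ∀ i j, m i * m j = ∑ k, c i j k • m k)
    (hb₁ : b i₀ = 1) (hm₁ : m i₀ = 1) (i : ι) :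
    b.constrAlgHom m c i₀ hb hm hb₁ hm₁ (b i) = m i :=
  constr_basis b K m i

end Module.Basis

section

variable {K A ι : Type*} [CommRing K] [CommRing A] [Algebra K A] [Fintype ι] [DecidableEq ι]

noncomputable def Algebra.leftMulMatrixTranspose (b : Module.Basis ι K A) : A →+* Matrix ι ι K where
  toFun a := (Algebra.leftMulMatrix b a)ᵀ
  map_one' := by simp
  map_mul' x y := by rw [mul_comm x y, map_mul, transpose_mul]
  map_zero' := by simp
  map_add' x y := by simp

theorem Algebra.leftMulMatrixTranspose_apply (b : Module.Basis ι K A) (a : A) (i j : ι) :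
    Algebra.leftMulMatrixTranspose b a i j = b.repr (a * b i) j :=
  Algebra.leftMulMatrix_eq_repr_mul b a j i

theorem Algebra.leftMulMatrixTranspose_basis (b : Module.Basis ι K A) (c : ι → ι → ι → K)
    (hb : ∀ i j, b i * b j = ∑ k, c i j k • b k) (i : ι) :
    Algebra.leftMulMatrixTranspose b (b i) = Matrix.of (c i) := by
  ext j k
  rw [Algebra.leftMulMatrixTranspose_apply, hb, b.repr_sum_self, of_apply]

end

section

variable {R S B : Type*} [CommRing R] [CommRing S] [Fintype B] [DecidableEq B]

def eigenvectorSubring (ρ : R →+* Matrix B B S) (χ : R →+* S) (v : B → S) : Subring R where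
  carrier := {r | ρ r *ᵥ v = χ r • v}
  one_mem' := by simp
  zero_mem' := by simp
  add_mem' {r s} hr hs := by
    simp only [Set.mem_ofPred_eq, map_add, add_mulVec, add_smul] at hr hs ⊢
    rw [hr, hs]
  neg_mem' {r} hr := by
    simp only [Set.mem_ofPred_eq, map_neg, neg_mulVec, neg_smul] at hr ⊢
    rw [hr]
  mul_mem' {r s} hr hs := by
    simp only [Set.mem_ofPred_eq, map_mul, ← mulVec_mulVec] at hr hs ⊢
    rw [hs, mulVec_smul, hr, smul_smul, mul_comm]

theorem mulVec_eq_smul_of_adjoin_eq_top (ρ : R →+* Matrix B B S) (χ : R →+* S) (v : B → S)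
    {s : Set R} (hs : Algebra.adjoin ℤ s = ⊤) (h : ∀ r ∈ s, ρ r *ᵥ v = χ r • v) (r : R) :
    ρ r *ᵥ v = χ r • v := by
  have hle : Algebra.adjoin ℤ s ≤ subalgebraOfSubring (eigenvectorSubring ρ χ v) :=
    Algebra.adjoin_le h
  exact hle (hs ▸ Algebra.mem_top)

end

theorem dvd_mul_of_mem_of_charge {R B ι : Type*} [CommRing R] [Fintype B] [DecidableEq B]
    (D : R →+* ℤ) {I : Ideal R} (ℓ : ι → R) (hgen : Algebra.adjoin ℤ (Set.range ℓ) = ⊤)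
    (ρ : R ⧸ I →+* Matrix B B ℤ) (q : B → ℤ) (M : ℤ)
    (hq : ∀ i x, D (ℓ i) * q x ≡ (ρ (Ideal.Quotient.mk I (ℓ i)) *ᵥ q) x [ZMOD M])
    {r : R} (hr : r ∈ I) (x : B) : M ∣ D r * q x := by
  set π := Ideal.Quotient.mk (Ideal.span {M})
  have hcharge := mulVec_eq_smul_of_adjoin_eq_top (π.mapMatrix.comp (ρ.comp (Ideal.Quotient.mk I)))
    (π.comp D) (π ∘ q) hgen (by
      rintro _ ⟨i, rfl⟩
      ext x
      simp only [RingHom.comp_apply, RingHom.mapMatrix_apply, ← RingHom.map_mulVec,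
        Pi.smul_apply, Function.comp_apply, smul_eq_mul, ← map_mul]
      exact Ideal.Quotient.eq.2 (Ideal.mem_span_singleton.2 (hq i x).dvd)) r
  have hρr : ρ (Ideal.Quotient.mk I r) = 0 := by
    rw [Ideal.Quotient.eq_zero_iff_mem.2 hr, map_zero]
  have := congrFun hcharge x
  simp only [RingHom.comp_apply, hρr, map_zero, zero_mulVec, Pi.zero_apply,
    Pi.smul_apply, Function.comp_apply, smul_eq_mul, ← map_mul] at this
  exact (Ideal.Quotient.eq_zero_iff_dvd M _).1 this.symm

theorem stmt_13 {R : Type} [CommRing R] (D : R →+* ℤ) (I : Ideal R)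
    {Φ : Type} [Fintype Φ] [DecidableEq Φ]
    (ℓ : Φ → R) (one : Φ)
    (hℓone : ℓ one = 1)
    -- `R` is generated as a ring by the lifts of the primaries
    (hgen : Algebra.adjoin ℤ (Set.range ℓ) = ⊤)
    -- the classes of the `ℓ λ` form a `ℤ`-basis of `R/I`
    (hlin : LinearIndependent ℤ (fun lam => Ideal.Quotient.mk I (ℓ lam)))
    (hspan : Submodule.span ℤ (Set.range (fun lam => Ideal.Quotient.mk I (ℓ lam))) = ⊤)
    -- the fusion coefficients
    (N : Φ → Φ → Φ → ℕ)
    (hmulN : ∀ lam mu, Ideal.Quotient.mk I (ℓ lam * ℓ mu)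
        = Ideal.Quotient.mk I (∑ nu, N lam mu nu • ℓ nu))
    (hNone : ∀ lam mu, N one lam mu = if lam = mu then 1 else 0)
    (hNcomm : ∀ lam mu nu, N lam mu nu = N mu lam nu)
    -- `Mt` is the gcd of the dimensions of the weights in the fusion ideal
    (Mt : ℕ)
    (hMt : {z : ℤ | ∃ x ∈ I, D x = z} = {z : ℤ | (Mt : ℤ) ∣ z}) :
    -- (a) any solution of the charge equations for the Verlinde nimrep
    --     satisfies `q_λ = q_1 · dim(λ)`
    (∀ (q : Φ → ℤ) (M : ℤ),
      (∀ lam x, D (ℓ lam) * q x ≡ ∑ y, (N lam x y : ℤ) * q y [ZMOD M]) →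
      ∀ lam, q lam ≡ q one * D (ℓ lam) [ZMOD M]) ∧
    -- (b) the dimension assignment solves the charge equations mod `Mt`
    (∀ lam x, D (ℓ lam) * D (ℓ x)
        ≡ ∑ y, (N lam x y : ℤ) * D (ℓ y) [ZMOD (Mt : ℤ)]) ∧
    -- (c) `Mt` is the largest such modulus: the charge-group of the Verlinde
    --     nimrep is `ℤ_{Mt}`
    (∀ M : ℤ,
      (∀ lam x, D (ℓ lam) * D (ℓ x)
          ≡ ∑ y, (N lam x y : ℤ) * D (ℓ y) [ZMOD M]) → M ∣ (Mt : ℤ)) ∧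
    -- (d) the charge-group of ANY nimrep of this fusion ring is `Mt`-torsion
    (∀ (B : Type) [Fintype B] [DecidableEq B] (Nm : Φ → Matrix B B ℕ),
      (∀ lam mu, Nm lam * Nm mu = ∑ nu, N lam mu nu • Nm nu) →
      Nm one = 1 →
      ∀ (q : B → ℤ) (M : ℤ),
        (∀ lam x, D (ℓ lam) * q x ≡ ∑ y, (Nm lam x y : ℤ) * q y [ZMOD M]) →
        ∀ x, M ∣ (Mt : ℤ) * q x) := by
  obtain ⟨x₀, hx₀I, hx₀D⟩ : (Mt : ℤ) ∈ {z : ℤ | ∃ x ∈ I, D x = z} := hMt ▸ dvd_refl _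
  have hdvd : ∀ r ∈ I, (Mt : ℤ) ∣ D r := fun r hr => hMt.subset ⟨r, hr, rfl⟩
  let b := Module.Basis.mk hlin hspan.ge
  have hb : ∀ i j, b i * b j = ∑ k, (N i j k : ℤ) • b k := fun i j => by
    simp only [b, Module.Basis.mk_apply, ← map_mul, hmulN, map_sum, map_nsmul, Nat.cast_smul_eq_nsmul]
  have hb₁ : b one = 1 := by rw [Module.Basis.mk_apply, hℓone, map_one]
  have htorsion : ∀ (B : Type) [Fintype B] [DecidableEq B] (ρ : R ⧸ I →+* Matrix B B ℤ)
      (q : B → ℤ) (M : ℤ), (∀ i x, D (ℓ i) * q x ≡ (ρ (b i) *ᵥ q) x [ZMOD M]) →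
      ∀ x, M ∣ Mt * q x := fun B _ _ ρ q M hq x => by
    simpa [hx₀D] using dvd_mul_of_mem_of_charge D ℓ hgen ρ q M (by simpa [b] using hq) hx₀I x
  refine ⟨fun q M hq lam => ?_, fun lam x => ?_, fun M hM => ?_,
    fun B _ _ Nm hNm hNm₁ q M hq => ?_⟩
  · simpa [mul_comm, hNcomm lam one, hNone] using (hq lam one).symm
  · refine (Int.modEq_iff_dvd.2 ?_).symm
    simpa [map_sum, nsmul_eq_mul] using hdvd _ (Ideal.Quotient.eq.1 (hmulN lam x))
  · simpa [hℓone] using htorsion Φ (Algebra.leftMulMatrixTranspose b) (D ∘ ℓ) M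
      (by simpa [Algebra.leftMulMatrixTranspose_basis b _ hb, mulVec, dotProduct] using hM) one
  · let Nmℤ : Φ → Matrix B B ℤ := fun i => (Nm i).map (↑)
    have hNmℤ : ∀ i j, Nmℤ i * Nmℤ j = ∑ k, (N i j k : ℤ) • Nmℤ k := fun i j => by
      have := congrArg (Nat.castRingHom ℤ).mapMatrix (hNm i j)
      simp only [map_mul, map_sum, map_nsmul, ← Nat.cast_smul_eq_nsmul ℤ] at this
      exact this
    have hNmℤ₁ : Nmℤ one = 1 := by simp [Nmℤ, hNm₁]
    refine htorsion B (b.constrAlgHom Nmℤ _ one hb hNmℤ hb₁ hNmℤ₁) q M fun i x => ?_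
    simpa [Module.Basis.constrAlgHom_basis, Nmℤ, mulVec, dotProduct] using hq i x
end

section
/- The D-series nimrep for SU(2): for κ = k+2 even, the quotient module R_{O(2)} / span_Z{κ_{κ/2}, κ_{j+κ/2} + κ_{-j+κ/2} : j ≥ 1} is a free Z-module with basis [δ], [κ_0], [κ_1], …, [κ_{k/2}], and the action of σ ∈ R_{SU(2)} (restricting to κ_1 ∈ R_{O(2)}) on this basis has multiplication graph the Dynkin diagram D_{k/2+2}; moreover this R_{SU(2)}-module structure factors through the fusion ideal (σ_{k+2}), making it a module over Ver_k(SU(2)). -/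
/-!
Multiplication by `δ` and by `κ₁` preserves `W = WO2 c` (`κ₁` moves the pair `κ_{c+t} + κ_{c-t}`
to the neighbouring pairs `t ± 1`), so `W` is an ideal, and modulo `W` the relation
`κ_{c+t} ≡ -κ_{c-t}` reduces every `κ_m` to `±κ_j` with `j < c`. Independence is detected by
characters: restricting to `SO(2)` gives `κ_m ↦ z^m + z^{-m}`, and pairing the coefficients with a
`4c`-periodic, `2c`-antiperiodic delta function gives functionals that vanish on `W` and pick out a
single `κ_i`; the value at a reflection picks out `δ`. Finally
`σ_{2c}(κ₁) = κ₁ + κ₃ + ⋯ + κ_{2c-1}`, whose double is a sum of pairs `κ_a + κ_b` with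
`a + b = 2c`; since the quotient is free, `σ_{2c}(κ₁)` itself lies in `W`.
-/

open scoped BigOperators
open Polynomial

noncomputable section

/-- The characters `σ_m` of SU(2). -/
def sigmaP : ℕ → Polynomial ℤ
  | 0 => 0
  | 1 => 1
  | m + 2 => Polynomial.X * sigmaP (m + 1) - sigmaP m

/-- The representation ring `R_{O(2)} = ℤ[δ,κ]/(δκ = κ, δ² = 1)`; the variable
`X 0` is `δ` and `X 1` is `κ = κ_1`. -/
abbrev RO2 : Type :=
  MvPolynomial (Fin 2) ℤ ⧸
    Ideal.span {MvPolynomial.X 0 * MvPolynomial.X 1 - MvPolynomial.X 1,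
                (MvPolynomial.X 0 : MvPolynomial (Fin 2) ℤ) ^ 2 - 1}

/-- The class of `δ = det` in `R_{O(2)}`. -/
def dO : RO2 := Ideal.Quotient.mk _ (MvPolynomial.X 0)

/-- The two-dimensional representations `κ_i` of `O(2)` (with the conventions
`κ_0 = 1 + δ`, `κ_1 = κ`, and `κ_1 κ_i = κ_{i+1} + κ_{i-1}`). -/
def kap : ℕ → RO2
  | 0 => 1 + dO
  | 1 => Ideal.Quotient.mk _ (MvPolynomial.X 1)
  | i + 2 => Ideal.Quotient.mk _ (MvPolynomial.X 1) * kap (i + 1) - kap i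

/-- `κ_m` for `m ∈ ℤ`, with the convention `κ_{-m} = κ_m`. -/
def kapZ (m : ℤ) : RO2 := kap m.natAbs

/-- The `ℤ`-span `span{κ_{κ/2}, κ_{j+κ/2} + κ_{-j+κ/2} : j ≥ 1}` (`c = κ/2`). -/
def WO2 (c : ℕ) : Submodule ℤ RO2 :=
  Submodule.span ℤ
    ({kap c} ∪ {x | ∃ j : ℕ, 1 ≤ j ∧ x = kap (c + j) + kapZ ((c : ℤ) - j)})

lemma mk_relation_eq_zero {p : MvPolynomial (Fin 2) ℤ}
    (hp : p = MvPolynomial.X 0 * MvPolynomial.X 1 - MvPolynomial.X 1 ∨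
      p = MvPolynomial.X 0 ^ 2 - 1) :
    (Ideal.Quotient.mk _ p : RO2) = 0 :=
  Ideal.Quotient.eq_zero_iff_mem.mpr (Ideal.subset_span (by simpa using hp))

lemma dO_mul_kap_one : dO * kap 1 = kap 1 := by
  have h := mk_relation_eq_zero (Or.inl rfl)
  rwa [map_sub, map_mul, sub_eq_zero] at h

lemma dO_mul_self : dO * dO = 1 := by
  have h := mk_relation_eq_zero (Or.inr rfl)
  rw [map_sub, map_pow, map_one, sub_eq_zero] at h
  exact (sq dO).symm.trans h

lemma kap_zero : kap 0 = 1 + dO := rfl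

lemma kap_add_two (n : ℕ) : kap (n + 2) = kap 1 * kap (n + 1) - kap n := rfl

lemma kap_one_mul_kap_zero : kap 1 * kap 0 = kap 1 + kap 1 := by
  rw [kap_zero, mul_add, mul_one, mul_comm (kap 1) dO, dO_mul_kap_one]

lemma kap_one_mul_kap_succ (n : ℕ) : kap 1 * kap (n + 1) = kap (n + 2) + kap n := by
  rw [kap_add_two]; ring

lemma dO_mul_kap (n : ℕ) : dO * kap n = kap n := by
  induction n using Nat.twoStepInduction with
  | zero => rw [kap_zero, mul_add, dO_mul_self]; ring
  | one => exact dO_mul_kap_one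
  | more n ih₁ ih₂ => rw [kap_add_two, mul_sub, mul_left_comm, ih₁, ih₂]

lemma dO_pow_mul_kap (m n : ℕ) : dO ^ m * kap n = kap n := by
  induction m with
  | zero => rw [pow_zero, one_mul]
  | succ m ih => rw [pow_succ dO m, mul_assoc, dO_mul_kap, ih]

lemma kapZ_natCast (n : ℕ) : kapZ n = kap n := rfl

lemma kapZ_neg (m : ℤ) : kapZ (-m) = kapZ m := by
  rw [kapZ, kapZ, Int.natAbs_neg]

lemma kap_one_mul_kapZ_natCast (n : ℕ) : kap 1 * kapZ n = kapZ (n + 1) + kapZ (n - 1) := by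
  rcases n with _ | n
  · simpa [kapZ] using kap_one_mul_kap_zero
  · push_cast
    rw [add_sub_cancel_right, kapZ_natCast, ← Nat.cast_succ, ← Nat.cast_succ, kapZ_natCast,
      kapZ_natCast, kap_one_mul_kap_succ]

lemma kap_one_mul_kapZ (m : ℤ) : kap 1 * kapZ m = kapZ (m + 1) + kapZ (m - 1) := by
  obtain ⟨n, rfl | rfl⟩ := Int.eq_nat_or_neg m
  · exact kap_one_mul_kapZ_natCast n
  · rw [kapZ_neg, kap_one_mul_kapZ_natCast, add_comm, ← kapZ_neg (n - 1), ← kapZ_neg (n + 1)]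
    congr 2 <;> ring

lemma dO_mul_kapZ (m : ℤ) : dO * kapZ m = kapZ m := dO_mul_kap _

lemma mul_mem_of_dO_mul_mem_of_kap_one_mul_mem {p : Submodule ℤ RO2}
    (hd : ∀ x ∈ p, dO * x ∈ p) (hk : ∀ x ∈ p, kap 1 * x ∈ p) (r : RO2) {x : RO2} (hx : x ∈ p) :
    r * x ∈ p := by
  obtain ⟨q, rfl⟩ := Ideal.Quotient.mk_surjective r
  induction q using MvPolynomial.induction_on generalizing x with
  | C a => simpa [Algebra.smul_def] using p.smul_mem a hx
  | add q₁ q₂ h₁ h₂ => rw [map_add, add_mul]; exact p.add_mem (h₁ hx) (h₂ hx)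
  | mul_X q n h =>
    rw [map_mul, mul_assoc]
    refine h ?_
    fin_cases n
    exacts [hd x hx, hk x hx]

section Ideal

variable (c : ℕ)

lemma kap_mem_WO2 : kap c ∈ WO2 c := Submodule.subset_span (Or.inl rfl)

lemma kapZ_add_kapZ_mem_WO2 (t : ℤ) : kapZ (c + t) + kapZ (c - t) ∈ WO2 c := by
  wlog ht : 0 ≤ t generalizing t
  · simpa [add_comm, sub_eq_add_neg] using this (-t) (by omega)
  obtain ⟨j, rfl⟩ := Int.eq_ofNat_of_zero_le ht
  rcases j.eq_zero_or_pos with rfl | hj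
  · rw [Nat.cast_zero, add_zero, sub_zero, kapZ_natCast]
    exact (WO2 c).add_mem (kap_mem_WO2 c) (kap_mem_WO2 c)
  · exact Submodule.subset_span (Or.inr ⟨j, hj, rfl⟩)

lemma WO2_le {p : Submodule ℤ RO2} (hc : kap c ∈ p)
    (h : ∀ t : ℤ, kapZ (c + t) + kapZ (c - t) ∈ p) : WO2 c ≤ p := by
  refine Submodule.span_le.mpr ?_
  rintro x (rfl | ⟨j, -, rfl⟩)
  exacts [hc, h j]

lemma dO_mul_mem_WO2 {x : RO2} (hx : x ∈ WO2 c) : dO * x ∈ WO2 c := by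
  refine WO2_le c (p := (WO2 c).comap (LinearMap.mulLeft ℤ dO)) ?_ (fun t => ?_) hx
  · simpa [dO_mul_kap] using kap_mem_WO2 c
  · simpa [mul_add, dO_mul_kapZ] using kapZ_add_kapZ_mem_WO2 c t

lemma kap_one_mul_mem_WO2 {x : RO2} (hx : x ∈ WO2 c) : kap 1 * x ∈ WO2 c := by
  refine WO2_le c (p := (WO2 c).comap (LinearMap.mulLeft ℤ (kap 1))) ?_ (fun t => ?_) hx
  · rw [Submodule.mem_comap, LinearMap.mulLeft_apply, ← kapZ_natCast c, kap_one_mul_kapZ]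
    exact kapZ_add_kapZ_mem_WO2 c 1
  · have h := (WO2 c).add_mem (kapZ_add_kapZ_mem_WO2 c (t + 1)) (kapZ_add_kapZ_mem_WO2 c (t - 1))
    simp only [Submodule.mem_comap, LinearMap.mulLeft_apply, mul_add, kap_one_mul_kapZ]
    convert h using 1
    ring_nf

lemma mul_mem_WO2 (r : RO2) {x : RO2} (hx : x ∈ WO2 c) : r * x ∈ WO2 c :=
  mul_mem_of_dO_mul_mem_of_kap_one_mul_mem (fun _ => dO_mul_mem_WO2 c)
    (fun _ => kap_one_mul_mem_WO2 c) r hx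

end Ideal

lemma span_dO_kap_eq_top : Submodule.span ℤ (insert dO (Set.range kap)) = ⊤ := by
  set p := Submodule.span ℤ (insert dO (Set.range kap))
  have hkap (n : ℕ) : kap n ∈ p := Submodule.subset_span (Set.mem_insert_of_mem _ ⟨n, rfl⟩)
  have hdO : dO ∈ p := Submodule.subset_span (Set.mem_insert _ _)
  have hone : (1 : RO2) ∈ p := by simpa [kap_zero] using p.sub_mem (hkap 0) hdO
  have closed (a : RO2) (h : ∀ x ∈ insert dO (Set.range kap), a * x ∈ p) (x : RO2) (hx : x ∈ p) :
      a * x ∈ p :=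
    (Submodule.map_span_le (LinearMap.mulLeft ℤ a) _ p).mpr h ⟨x, hx, rfl⟩
  have hd := closed dO <| by
    rintro _ (rfl | ⟨n, rfl⟩)
    · rwa [dO_mul_self]
    · rw [dO_mul_kap]; exact hkap n
  have hk := closed (kap 1) <| by
    rintro _ (rfl | ⟨_ | n, rfl⟩)
    · rw [mul_comm (kap 1) dO, dO_mul_kap_one]; exact hkap 1
    · rw [kap_one_mul_kap_zero]; exact p.add_mem (hkap 1) (hkap 1)
    · rw [kap_one_mul_kap_succ]; exact p.add_mem (hkap _) (hkap n)
  exact eq_top_iff.mpr fun r _ => by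
    simpa using mul_mem_of_dO_mul_mem_of_kap_one_mul_mem hd hk r hone

section Characters

open LaurentPolynomial

/-- The character of a virtual `O(2)`-representation, recorded as its restriction to `SO(2)`
(a Laurent polynomial in the rotation `z`) together with its value at a reflection. -/
def charPair : RO2 →+* LaurentPolynomial ℤ × ℤ :=
  Ideal.Quotient.lift _ (MvPolynomial.eval₂Hom (Int.castRingHom _) ![(1, -1), (T 1 + T (-1), 0)])
    fun _ ha => (Ideal.span_le.mpr (by
      rintro _ (rfl | rfl) <;> simp [Prod.ext_iff]) : _ ≤ RingHom.ker _) ha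

lemma charPair_mk (p : MvPolynomial (Fin 2) ℤ) :
    charPair (Ideal.Quotient.mk _ p)
      = MvPolynomial.eval₂Hom (Int.castRingHom _) ![(1, -1), (T 1 + T (-1), 0)] p :=
  Ideal.Quotient.lift_mk _ _ _

lemma charPair_dO : charPair dO = (1, -1) := by
  simp [dO, charPair_mk]

lemma charPair_kap_one : charPair (kap 1) = (T 1 + T (-1), 0) := by
  simp [kap, charPair_mk]

lemma charPair_kap (n : ℕ) : charPair (kap n) = (T n + T (-n), 0) := by
  induction n using Nat.twoStepInduction with
  | zero => simp [kap_zero, charPair_dO, Prod.ext_iff]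
  | one => simpa using charPair_kap_one
  | more n ih₁ ih₂ =>
    rw [kap_add_two, map_sub, map_mul, charPair_kap_one, ih₁, ih₂]
    simp only [Prod.ext_iff, Prod.fst_sub, Prod.fst_mul, Prod.snd_sub, Prod.snd_mul, add_mul,
      mul_add, ← T_add]
    push_cast
    exact ⟨by ring_nf, by simp⟩

lemma charPair_kapZ (m : ℤ) : charPair (kapZ m) = (T m + T (-m), 0) := by
  obtain ⟨n, rfl | rfl⟩ := Int.eq_nat_or_neg m
  · exact charPair_kap n
  · rw [kapZ_neg, kapZ_natCast, charPair_kap, neg_neg, add_comm]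

def coeffPairing (w : ℤ → ℤ) : LaurentPolynomial ℤ →ₗ[ℤ] ℤ :=
  Finsupp.linearCombination ℤ w ∘ₗ (AddMonoidAlgebra.coeffLinearEquiv ℤ).toLinearMap

lemma coeffPairing_T (w : ℤ → ℤ) (m : ℤ) : coeffPairing w (T m) = w m := by
  change Finsupp.linearCombination ℤ w (Finsupp.single m 1) = w m
  rw [Finsupp.linearCombination_single, one_smul]

end Characters

def altDelta (c x : ℤ) : ℤ :=
  (if 4 * c ∣ x then 1 else 0) - (if 4 * c ∣ x - 2 * c then 1 else 0)

lemma altDelta_neg (c x : ℤ) : altDelta c (-x) = altDelta c x := by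
  have h : 4 * c ∣ -x - 2 * c ↔ 4 * c ∣ x - 2 * c := by
    rw [show -x - 2 * c = -(x - 2 * c) - 4 * c by ring, dvd_sub_self_right, dvd_neg]
  simp only [altDelta, dvd_neg, h]

lemma altDelta_add_two_mul (c x : ℤ) : altDelta c (x + 2 * c) = -altDelta c x := by
  have h : 4 * c ∣ x + 2 * c ↔ 4 * c ∣ x - 2 * c := by
    rw [show x + 2 * c = x - 2 * c + 4 * c by ring, dvd_add_self_right]
  simp only [altDelta, add_sub_cancel_right, h]
  ring

lemma altDelta_add_eq_neg_sub (c x : ℤ) : altDelta c (c + x) = -altDelta c (c - x) := by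
  rw [show c + x = x - c + 2 * c by ring, altDelta_add_two_mul, ← altDelta_neg, neg_sub]

lemma altDelta_eq_ite {c x : ℤ} (h₁ : -(2 * c) < x) (h₂ : x < 2 * c) :
    altDelta c x = if x = 0 then 1 else 0 := by
  have h : 4 * c ∣ x ↔ x = 0 :=
    ⟨fun h => Int.eq_zero_of_abs_lt_dvd h (abs_lt.mpr ⟨by omega, by omega⟩), by rintro rfl; simp⟩
  have h' : ¬ 4 * c ∣ x - 2 * c := fun h' => by
    have := Int.eq_zero_of_abs_lt_dvd h' (abs_lt.mpr ⟨by omega, by omega⟩)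
    omega
  simp only [altDelta, h, h', if_false, sub_zero]

def dualFun (c i : ℕ) : RO2 →ₗ[ℤ] ℤ :=
  coeffPairing (fun m => altDelta c (m - i)) ∘ₗ LinearMap.fst ℤ _ ℤ ∘ₗ
    charPair.toIntAlgHom.toLinearMap

def reflFun : RO2 →ₗ[ℤ] ℤ := LinearMap.snd ℤ _ ℤ ∘ₗ charPair.toIntAlgHom.toLinearMap

lemma dualFun_kapZ (c i : ℕ) (m : ℤ) :
    dualFun c i (kapZ m) = altDelta c (m - i) + altDelta c (m + i) := by
  simp only [dualFun, LinearMap.comp_apply, AlgHom.toLinearMap_apply, RingHom.toIntAlgHom_apply,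
    charPair_kapZ, LinearMap.fst_apply, map_add, coeffPairing_T]
  rw [← altDelta_neg c (m + i), neg_add']

lemma dualFun_kap_of_lt {c i j : ℕ} (hi : i < c) (hj : j < c) :
    dualFun c i (kap j) = if j = i then (if i = 0 then 2 else 1) else 0 := by
  rw [← kapZ_natCast, dualFun_kapZ, altDelta_eq_ite (by omega) (by omega),
    altDelta_eq_ite (by omega) (by omega)]
  split_ifs <;> omega

lemma reflFun_kapZ (m : ℤ) : reflFun (kapZ m) = 0 := by
  simp [reflFun, charPair_kapZ]

lemma reflFun_kap (n : ℕ) : reflFun (kap n) = 0 := reflFun_kapZ n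

lemma reflFun_dO : reflFun dO = -1 := by
  simp [reflFun, charPair_dO]

lemma WO2_le_ker_dualFun (c i : ℕ) : WO2 c ≤ LinearMap.ker (dualFun c i) := by
  refine WO2_le c ?_ fun t => ?_
  · rw [LinearMap.mem_ker, ← kapZ_natCast, dualFun_kapZ, sub_eq_add_neg,
      altDelta_add_eq_neg_sub, sub_neg_eq_add]
    ring
  · rw [LinearMap.mem_ker, map_add, dualFun_kapZ, dualFun_kapZ, add_sub_assoc, add_assoc _ t,
      altDelta_add_eq_neg_sub, altDelta_add_eq_neg_sub]
    ring_nf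

lemma WO2_le_ker_reflFun (c : ℕ) : WO2 c ≤ LinearMap.ker reflFun := by
  refine WO2_le c ?_ fun t => ?_ <;> simp [← kapZ_natCast, reflFun_kapZ]

def nimrepVec (c : ℕ) : Fin (c + 1) → RO2 := Fin.cases dO fun j => kap j

@[simp] lemma nimrepVec_zero (c : ℕ) : nimrepVec c 0 = dO := rfl

@[simp] lemma nimrepVec_succ (c : ℕ) (j : Fin c) : nimrepVec c j.succ = kap j := rfl

section Basis

variable (c : ℕ)

lemma mk_kap_mem_span_nimrepVec (hc : 1 ≤ c) (m : ℕ) :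
    Submodule.Quotient.mk (kap m) ∈ Submodule.span ℤ (Set.range ((WO2 c).mkQ ∘ nimrepVec c)) := by
  induction m using Nat.strong_induction_on with
  | _ m ih =>
  rcases lt_trichotomy m c with hm | rfl | hm
  · exact Submodule.subset_span ⟨Fin.succ ⟨m, hm⟩, rfl⟩
  · rw [(Submodule.Quotient.mk_eq_zero _).mpr (kap_mem_WO2 m)]
    exact zero_mem _
  · have hrefl : Submodule.Quotient.mk (kap m)
        = -Submodule.Quotient.mk (p := WO2 c) (kapZ (c - (m - c))) := by
      rw [eq_neg_iff_add_eq_zero, ← Submodule.Quotient.mk_add, Submodule.Quotient.mk_eq_zero]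
      simpa [kapZ_natCast] using kapZ_add_kapZ_mem_WO2 c (m - c)
    rw [hrefl]
    exact neg_mem (ih _ (by omega))

lemma span_nimrepVec_eq_top (hc : 1 ≤ c) :
    Submodule.span ℤ (Set.range ((WO2 c).mkQ ∘ nimrepVec c)) = ⊤ := by
  refine eq_top_iff.mpr fun y _ => ?_
  obtain ⟨x, rfl⟩ := (WO2 c).mkQ_surjective y
  have hle : Submodule.span ℤ (insert dO (Set.range kap))
      ≤ (Submodule.span ℤ (Set.range ((WO2 c).mkQ ∘ nimrepVec c))).comap (WO2 c).mkQ := by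
    refine Submodule.span_le.mpr ?_
    rintro _ (rfl | ⟨m, rfl⟩)
    · exact Submodule.subset_span ⟨0, rfl⟩
    · exact mk_kap_mem_span_nimrepVec c hc m
  exact hle (span_dO_kap_eq_top ▸ Submodule.mem_top)

lemma linearIndependent_nimrepVec : LinearIndependent ℤ ((WO2 c).mkQ ∘ nimrepVec c) := by
  rw [Fintype.linearIndependent_iff]
  intro g hg
  have hmem : ∑ j, g j • nimrepVec c j ∈ WO2 c := by
    rw [← Submodule.Quotient.mk_eq_zero, ← Submodule.mkQ_apply, map_sum]
    simpa only [map_smul, Function.comp_apply] using hg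
  have h0 : g 0 = 0 := by
    have h := WO2_le_ker_reflFun c hmem
    simpa only [LinearMap.mem_ker, map_add, map_sum, map_smul, Fin.sum_univ_succ, nimrepVec_zero,
      nimrepVec_succ, reflFun_dO, reflFun_kap, smul_zero, Finset.sum_const_zero, add_zero,
      smul_eq_mul, mul_zero, mul_neg, mul_one, neg_eq_zero] using h
  have hsucc (i : Fin c) : g i.succ = 0 := by
    have h := WO2_le_ker_dualFun c i hmem
    simp only [LinearMap.mem_ker, map_sum, map_smul, Fin.sum_univ_succ, nimrepVec_zero,
      nimrepVec_succ, h0, zero_smul, zero_add, dualFun_kap_of_lt i.isLt (Fin.isLt _),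
      Fin.val_inj, smul_eq_mul, mul_ite, mul_zero, Finset.sum_ite_eq', Finset.mem_univ,
      if_true] at h
    split_ifs at h <;> omega
  exact Fin.cases h0 hsucc

def nimrepBasis (hc : 1 ≤ c) : Module.Basis (Fin (c + 1)) ℤ (RO2 ⧸ WO2 c) :=
  .mk (linearIndependent_nimrepVec c) (span_nimrepVec_eq_top c hc).ge

lemma nimrepBasis_apply (hc : 1 ≤ c) (j : Fin (c + 1)) :
    nimrepBasis c hc j = Submodule.Quotient.mk (nimrepVec c j) :=
  Module.Basis.mk_apply _ _ _

end Basis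

lemma kap_one_mul_dO_pow (m : ℕ) : kap 1 * dO ^ m = kap 1 := by
  rw [mul_comm (kap 1), dO_pow_mul_kap]

lemma dO_pow_add_dO_pow_succ (m : ℕ) : dO ^ m + dO ^ (m + 1) = kap 0 := by
  rw [pow_succ dO m, ← mul_one_add (dO ^ m) dO, ← kap_zero, dO_pow_mul_kap]

lemma aeval_kap_one_sigmaP (m : ℕ) :
    aeval (kap 1) (sigmaP (2 * m)) = ∑ t ∈ Finset.range m, kap (2 * t + 1) ∧
      aeval (kap 1) (sigmaP (2 * m + 1)) = ∑ t ∈ Finset.range m, kap (2 * t + 2) + dO ^ m := by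
  induction m with
  | zero => simp [sigmaP]
  | succ m ih =>
    obtain ⟨h_even, h_odd⟩ := ih
    have h_even' : aeval (kap 1) (sigmaP (2 * (m + 1)))
        = ∑ t ∈ Finset.range (m + 1), kap (2 * t + 1) := by
      have step (t : ℕ) : kap 1 * kap (2 * t + 2) = kap (2 * (t + 1) + 1) + kap (2 * t + 1) :=
        kap_one_mul_kap_succ (2 * t + 1)
      rw [show 2 * (m + 1) = 2 * m + 2 by ring, sigmaP, map_sub, map_mul, aeval_X, h_odd, h_even,
        mul_add, kap_one_mul_dO_pow, Finset.mul_sum, Finset.sum_range_succ']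
      simp only [step, Finset.sum_add_distrib]
      abel
    have step (t : ℕ) : kap 1 * kap (2 * t + 1) = kap (2 * t + 2) + kap (2 * t) :=
      kap_one_mul_kap_succ (2 * t)
    refine ⟨h_even', ?_⟩
    rw [show 2 * (m + 1) + 1 = 2 * m + 1 + 2 by ring, sigmaP, map_sub, map_mul, aeval_X,
      ← show 2 * (m + 1) = 2 * m + 1 + 1 by ring, h_even', h_odd, Finset.mul_sum]
    simp only [step, Finset.sum_add_distrib]
    rw [Finset.sum_range_succ' (fun t => kap (2 * t)), Finset.sum_range_succ _ m,
      ← dO_pow_add_dO_pow_succ m]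
    simp only [mul_add, mul_one]
    abel

section Fusion

variable (c : ℕ)

lemma kap_add_kap_mem_WO2 {a b : ℕ} (h : a + b = 2 * c) : kap a + kap b ∈ WO2 c := by
  have hW := kapZ_add_kapZ_mem_WO2 c (a - c)
  rwa [add_sub_cancel, show (c : ℤ) - (a - c) = b by omega, kapZ_natCast, kapZ_natCast] at hW

lemma aeval_kap_one_sigmaP_mem_WO2 (hc : 1 ≤ c) : aeval (kap 1) (sigmaP (2 * c)) ∈ WO2 c := by
  have hdouble : (2 : ℤ) • aeval (kap 1) (sigmaP (2 * c)) ∈ WO2 c := by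
    rw [(aeval_kap_one_sigmaP c).1, two_smul]
    nth_rewrite 2 [← Finset.sum_range_reflect]
    rw [← Finset.sum_add_distrib]
    refine Submodule.sum_mem _ fun t ht => kap_add_kap_mem_WO2 c ?_
    have := Finset.mem_range.mp ht
    omega
  have : Module.Free ℤ (RO2 ⧸ WO2 c) := .of_basis (nimrepBasis c hc)
  rw [← Submodule.Quotient.mk_eq_zero]
  refine smul_right_injective _ (two_ne_zero : (2 : ℤ) ≠ 0) ?_
  simp only [smul_zero]
  rwa [← Submodule.Quotient.mk_smul, Submodule.Quotient.mk_eq_zero]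

end Fusion

theorem stmt_15_general (k c : ℕ) (hkc : k + 2 = 2 * c) :
    -- `[δ], [κ_0], [κ_1], …, [κ_{k/2}]` is a `ℤ`-basis of the quotient
    (∃ B : Module.Basis (Fin (c + 1)) ℤ (RO2 ⧸ WO2 c),
      B 0 = Submodule.Quotient.mk dO ∧
      ∀ i : ℕ, ∀ h : i + 1 < c + 1,
        B ⟨i + 1, h⟩ = Submodule.Quotient.mk (kap i)) ∧
    -- multiplication by `κ_1` descends to the quotient ...
    (∃ φ : (RO2 ⧸ WO2 c) →ₗ[ℤ] (RO2 ⧸ WO2 c),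
      (∀ x : RO2, φ (Submodule.Quotient.mk x)
          = Submodule.Quotient.mk (kap 1 * x)) ∧
      -- ... and realizes the Dynkin diagram `D_{k/2+2}` on this basis:
      φ (Submodule.Quotient.mk dO) = Submodule.Quotient.mk (kap 1) ∧
      φ (Submodule.Quotient.mk (kap 0))
        = Submodule.Quotient.mk (kap 1) + Submodule.Quotient.mk (kap 1) ∧
      (∀ i : ℕ, 1 ≤ i →
        φ (Submodule.Quotient.mk (kap i))
          = Submodule.Quotient.mk (kap (i + 1)) + Submodule.Quotient.mk (kap (i - 1))) ∧
      Submodule.Quotient.mk (kap c) = (0 : RO2 ⧸ WO2 c)) ∧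
    -- the `R_{SU(2)}`-module structure factors through the fusion ideal
    -- `(σ_{k+2})` (where `σ` restricts to `κ_1`), so it is a module over
    -- `Ver_k(SU(2))`
    (∀ x : RO2,
      Submodule.Quotient.mk ((Polynomial.aeval (kap 1) (sigmaP (k + 2))) * x)
        = (0 : RO2 ⧸ WO2 c)) := by
  have hc : 1 ≤ c := by omega
  let φ := (WO2 c).mapQ (WO2 c) (LinearMap.mulLeft ℤ (kap 1)) fun _ => kap_one_mul_mem_WO2 c
  have hφ (x : RO2) : φ (Submodule.Quotient.mk x) = Submodule.Quotient.mk (kap 1 * x) := rfl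
  refine ⟨⟨nimrepBasis c hc, nimrepBasis_apply c hc 0, fun i h => ?_⟩,
    ⟨φ, hφ, ?_, ?_, fun i hi => ?_, ?_⟩, fun x => ?_⟩
  · exact nimrepBasis_apply c hc (Fin.succ ⟨i, by omega⟩)
  · rw [hφ, mul_comm (kap 1) dO, dO_mul_kap_one]
  · rw [hφ, kap_one_mul_kap_zero, Submodule.Quotient.mk_add]
  · obtain ⟨n, rfl⟩ := Nat.exists_eq_add_of_le' hi
    rw [hφ, kap_one_mul_kap_succ, Submodule.Quotient.mk_add]
    rfl
  · exact (Submodule.Quotient.mk_eq_zero _).mpr (kap_mem_WO2 c)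
  · rw [Submodule.Quotient.mk_eq_zero, mul_comm _ x, hkc]
    exact mul_mem_WO2 c x (aeval_kap_one_sigmaP_mem_WO2 c hc)

theorem stmt_15 (k c : ℕ) (hkc : k + 2 = 2 * c) (hc1 : 1 ≤ c) :
    -- `[δ], [κ_0], [κ_1], …, [κ_{k/2}]` is a `ℤ`-basis of the quotient
    (∃ B : Module.Basis (Fin (c + 1)) ℤ (RO2 ⧸ WO2 c),
      B 0 = Submodule.Quotient.mk dO ∧
      ∀ i : ℕ, ∀ h : i + 1 < c + 1,
        B ⟨i + 1, h⟩ = Submodule.Quotient.mk (kap i)) ∧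
    -- multiplication by `κ_1` descends to the quotient ...
    (∃ φ : (RO2 ⧸ WO2 c) →ₗ[ℤ] (RO2 ⧸ WO2 c),
      (∀ x : RO2, φ (Submodule.Quotient.mk x)
          = Submodule.Quotient.mk (kap 1 * x)) ∧
      -- ... and realizes the Dynkin diagram `D_{k/2+2}` on this basis:
      φ (Submodule.Quotient.mk dO) = Submodule.Quotient.mk (kap 1) ∧
      φ (Submodule.Quotient.mk (kap 0))
        = Submodule.Quotient.mk (kap 1) + Submodule.Quotient.mk (kap 1) ∧
      (∀ i : ℕ, 1 ≤ i →
        φ (Submodule.Quotient.mk (kap i))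
          = Submodule.Quotient.mk (kap (i + 1)) + Submodule.Quotient.mk (kap (i - 1))) ∧
      Submodule.Quotient.mk (kap c) = (0 : RO2 ⧸ WO2 c)) ∧
    -- the `R_{SU(2)}`-module structure factors through the fusion ideal
    -- `(σ_{k+2})` (where `σ` restricts to `κ_1`), so it is a module over
    -- `Ver_k(SU(2))`
    (∀ x : RO2,
      Submodule.Quotient.mk ((Polynomial.aeval (kap 1) (sigmaP (k + 2))) * x)
        = (0 : RO2 ⧸ WO2 c)) :=
  stmt_15_general k c hkc

end
end

section
/- Charge-conjugation twisted nimrep decomposes for odd d (part of Theorem 5, algebraic form): let G = SU(n), d | n odd, Z_d the order-d central subgroup, and let c denote complex conjugation (an automorphism of G). Then the c-twisted adjoint action of G × Z_d on G, (g,z).h = g h c(g)^{-1} z, is equivariantly isomorphic to the action (g,z).h = (√z g) h c(√z g)^{-1} where √z = z^{(d+1)/2}; hence for any functor F from G-spaces-with-action to R_G-modules respecting equivariant isomorphism, F of the (G × Z_d)-twisted action is isomorphic to R_{Z_d} ⊗_{R_G} F of the G-twisted action. Concretely at the level of the isomorphism of actions: since c(z^{1/2}) = z^{-1/2} for central z in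 SU(n) with d odd, (g,z) ↦ (z^{(d+1)/2} g) intertwines the two actions. -/
theorem stmt_19 {G : Type} [Group G] (c : G ≃* G) (d : ℕ) (hd : Odd d)
    (Zd : Subgroup G) (hZc : Zd ≤ Subgroup.center G)
    (hzd : ∀ z ∈ Zd, z ^ d = 1)
    (hcz : ∀ z ∈ Zd, c z = z⁻¹) :
    -- the two actions agree: `(g,z) ↦ √z g` intertwines them
    (∀ (g h : G) (z : G), z ∈ Zd →
      g * h * (c g)⁻¹ * z
        = (z ^ ((d + 1) / 2) * g) * h * (c (z ^ ((d + 1) / 2) * g))⁻¹) ∧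
    -- hence every invariant `F` of `(G × Z_d)`-actions on `G` respecting
    -- equivariant isomorphism takes isomorphic values on the `c`-twisted
    -- adjoint action of `G × Z_d` and on the pulled-back `G`-twisted action
    (∀ F : ((G × Zd) → G → G) → Type,
      (∀ a b : (G × Zd) → G → G,
        (∃ e : G ≃ G, ∀ p x, e (a p x) = b p (e x)) →
        Nonempty (F a ≃ F b)) →
      Nonempty
        (F (fun p h => p.1 * h * (c p.1)⁻¹ * (p.2 : G)) ≃
         F (fun p h => ((p.2 : G) ^ ((d + 1) / 2) * p.1) * h *
              (c ((p.2 : G) ^ ((d + 1) / 2) * p.1))⁻¹))) := by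
  have key : ∀ (g h : G) (z : G), z ∈ Zd →
      g * h * (c g)⁻¹ * z
        = (z ^ ((d + 1) / 2) * g) * h * (c (z ^ ((d + 1) / 2) * g))⁻¹ := by
    intro g h z hz
    set s := z ^ ((d + 1) / 2) with hs
    have hsZ : s ∈ Zd := pow_mem hz _
    have hs2 : s * s = z := by
      rw [hs, ← pow_add]
      obtain ⟨k, hk⟩ := hd
      have : (d + 1) / 2 + (d + 1) / 2 = d + 1 := by omega
      rw [this, pow_succ, hzd z hz, one_mul]
    have hcs : c s = s⁻¹ := hcz s hsZ
    have hcent : ∀ x : G, s * x = x * s := fun x =>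
      (Subgroup.mem_center_iff.mp (hZc hsZ) x).symm
    rw [map_mul, hcs, mul_inv_rev, inv_inv]
    symm
    calc s * g * h * ((c g)⁻¹ * s)
        = s * (g * h * (c g)⁻¹) * s := by group
      _ = g * h * (c g)⁻¹ * s * s := by rw [hcent]
      _ = g * h * (c g)⁻¹ * z := by rw [mul_assoc, hs2]
  refine ⟨key, fun F hF => hF _ _ ⟨Equiv.refl G, ?_⟩⟩
  intro p x
  simpa using key p.1 x p.2 p.2.2
end
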